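/- arXiv:2106.12221 — 6 statements merged into one kernel-verified Lean document; each statement's English description precedes it below -/
import Mathlib

section
/- Let k, d ∈ ℕ with 1 ≤ k ≤ d, let A_j ⊆ ℝ̄ (extended reals) be nonempty for j = 1, …, k, and set A := A_1 × … × A_k. Let g_1, …, g_d : A → [0,1] and f : P([d]) → ℝ all be fully k-increasing. Define h : A → ℝ by h(x) := Σ_{α ⊆ [d]} f(α) · Π_{i ∈ α} g_i(x) · Π_{j ∈ [d]∖α} (1 − g_j(x)). Then h is fully k-increasing. -/
open Finset

/-- Discrete difference `(Δ_α f)(γ) = Σ_{β ⊆ α} (−1)^{|α|−|β|} f(γ ∪ β)` of a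
pseudo-Boolean function. -/
def pbDiff {d : ℕ} (f : Finset (Fin d) → ℝ) (α γ : Finset (Fin d)) : ℝ :=
  ∑ β ∈ α.powerset, (-1 : ℝ) ^ (α.card - β.card) * f (γ ∪ β)

/-- A pseudo-Boolean function is fully `k`-increasing. -/
def PBFullyInc {d : ℕ} (k : ℕ) (f : Finset (Fin d) → ℝ) : Prop :=
  ∀ β : Finset (Fin d), 1 ≤ β.card → β.card ≤ k →
    ∀ γ : Finset (Fin d), Disjoint γ β → 0 ≤ pbDiff f β γ

/-- The shifted point `s + q ⊙ h`. -/
noncomputable def shiftE {k : ℕ} (s : Fin k → EReal) (h : Fin k → ℝ) (q : Finset (Fin k)) :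
    Fin k → EReal := fun i => s i + (if i ∈ q then (h i : EReal) else 0)

/-- `g` is fully `k'`-increasing on the product set `A = A_1 × … × A_k ⊆ ℝ̄^k`. -/
noncomputable def FullyIncOnE {k : ℕ} (k' : ℕ) (A : Fin k → Set EReal)
    (g : (Fin k → EReal) → ℝ) : Prop :=
  ∀ (s : Fin k → EReal) (h : Fin k → ℝ), (∀ i, 0 ≤ h i) →
    ∀ p : Finset (Fin k), 1 ≤ p.card → p.card ≤ k' →
      (∀ q ∈ p.powerset, ∀ i, shiftE s h q i ∈ A i) →
      0 ≤ ∑ q ∈ p.powerset, (-1 : ℝ) ^ (p.card - q.card) * g (shiftE s h q)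

/-! ### Auxiliary lemmas -/

lemma shiftE_union {k : ℕ} (s : Fin k → EReal) (h : Fin k → ℝ) {q r : Finset (Fin k)}
    (hqr : Disjoint q r) : shiftE (shiftE s h q) h r = shiftE s h (q ∪ r) := by
  funext i
  simp only [shiftE, mem_union]
  by_cases hq : i ∈ q
  · have hr : i ∉ r := Finset.disjoint_left.mp hqr hq
    simp [hq, hr]
  · by_cases hr : i ∈ r <;> simp [hq, hr, add_assoc]

/-- Swapping a double sum over nested powersets. -/
lemma sum_powerset_swap {ι : Type*} [DecidableEq ι] (p : Finset ι)
    (F : Finset ι → Finset ι → ℝ) :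
    ∑ q ∈ p.powerset, ∑ r ∈ q.powerset, F q r
      = ∑ r ∈ p.powerset, ∑ t ∈ (p \ r).powerset, F (r ∪ t) r := by
  rw [Finset.sum_sigma', Finset.sum_sigma']
  refine Finset.sum_nbij' (fun x => ⟨x.2, x.1 \ x.2⟩) (fun x => ⟨x.1 ∪ x.2, x.1⟩)
    ?_ ?_ ?_ ?_ ?_
  · rintro ⟨q, r⟩ hx
    simp only [mem_sigma, mem_powerset] at hx ⊢
    exact ⟨hx.2.trans hx.1, sdiff_subset_sdiff hx.1 le_rfl⟩
  · rintro ⟨r, t⟩ hx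
    simp only [mem_sigma, mem_powerset] at hx ⊢
    refine ⟨union_subset hx.1 (hx.2.trans (sdiff_subset)), subset_union_left⟩
  · rintro ⟨q, r⟩ hx
    simp only [mem_sigma, mem_powerset] at hx
    simp [Finset.union_sdiff_of_subset hx.2]
  · rintro ⟨r, t⟩ hx
    simp only [mem_sigma, mem_powerset] at hx
    have hd : Disjoint r t := by
      rw [Finset.disjoint_left]
      intro x hxr hxt
      exact (Finset.mem_sdiff.mp (hx.2 hxt)).2 hxr
    simp [Finset.union_sdiff_cancel_left hd]
  · rintro ⟨q, r⟩ hx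
    simp only [mem_sigma, mem_powerset] at hx
    simp [Finset.union_sdiff_of_subset hx.2]

/-- Alternating sum over a powerset. -/
lemma sum_powerset_eps {ι : Type*} [DecidableEq ι] (p : Finset ι) :
    ∑ q ∈ p.powerset, (-1 : ℝ) ^ (p.card - q.card) = if p = ∅ then 1 else 0 := by
  have h1 : ∑ q ∈ p.powerset, (-1 : ℝ) ^ (p.card - q.card)
      = ∑ q ∈ p.powerset, (-1 : ℝ) ^ q.card := by
    refine Finset.sum_nbij' (fun q => p \ q) (fun q => p \ q) ?_ ?_ ?_ ?_ ?_ <;>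
      simp only [mem_powerset]
    · exact fun q _ => sdiff_subset
    · exact fun q _ => sdiff_subset
    · exact fun q hq => Finset.sdiff_sdiff_eq_self hq
    · exact fun q hq => Finset.sdiff_sdiff_eq_self hq
    · intro q hq
      rw [Finset.card_sdiff_of_subset hq]
  have h2 : ∑ q ∈ p.powerset, ((-1 : ℤ) ^ q.card) = if p = ∅ then 1 else 0 :=
    Finset.sum_powerset_neg_one_pow_card
  rw [h1]
  have h3 : ((∑ q ∈ p.powerset, (-1 : ℤ) ^ q.card : ℤ) : ℝ)
      = if p = ∅ then (1:ℝ) else 0 := by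
    rw [h2]; split <;> norm_num
  rw [← h3]; push_cast; rfl

/-- Möbius inversion over the Boolean lattice. -/
lemma sum_powerset_mobius {ι : Type*} [DecidableEq ι] (q : Finset ι) (a : Finset ι → ℝ) :
    ∑ r ∈ q.powerset, ∑ t ∈ r.powerset, (-1 : ℝ) ^ (r.card - t.card) * a t = a q := by
  rw [sum_powerset_swap q (fun r t => (-1 : ℝ) ^ (r.card - t.card) * a t)]
  have key : ∀ t ∈ q.powerset,
      (∑ m ∈ (q \ t).powerset, (-1 : ℝ) ^ ((t ∪ m).card - t.card) * a t)
        = if t = q then a t else 0 := by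
    intro t ht
    rw [mem_powerset] at ht
    have h1 : ∀ m ∈ (q \ t).powerset,
        (-1 : ℝ) ^ ((t ∪ m).card - t.card) * a t = (-1 : ℝ) ^ m.card * a t := by
      intro m hm
      rw [mem_powerset] at hm
      have hd : Disjoint t m := by
        rw [Finset.disjoint_left]
        intro x hxt hxm
        exact (Finset.mem_sdiff.mp (hm hxm)).2 hxt
      rw [Finset.card_union_of_disjoint hd]
      congr 2
      omega
    rw [Finset.sum_congr rfl h1, ← Finset.sum_mul]
    have := sum_powerset_eps (q \ t)
    have h0 : ∀ m : Finset ι, m ∈ (q \ t).powerset →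
        (-1 : ℝ) ^ ((q \ t).card - m.card) = (-1:ℝ) ^ ((q\t).card - m.card) := fun _ _ => rfl
    -- rewrite exponent: we need ∑ (-1)^m.card, reuse the sdiff bijection trick
    have h2 : ∑ m ∈ (q \ t).powerset, (-1 : ℝ) ^ m.card
        = if (q \ t) = ∅ then 1 else 0 := by
      rw [← sum_powerset_eps (q \ t)]
      refine Finset.sum_nbij' (fun m => (q \ t) \ m) (fun m => (q \ t) \ m) ?_ ?_ ?_ ?_ ?_ <;>
        simp only [mem_powerset]
      · exact fun m _ => sdiff_subset
      · exact fun m _ => sdiff_subset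
      · exact fun m hm => Finset.sdiff_sdiff_eq_self hm
      · exact fun m hm => Finset.sdiff_sdiff_eq_self hm
      · intro m hm
        rw [Finset.card_sdiff_of_subset hm]
        congr 1
        have := Finset.card_le_card hm
        omega
    rw [h2]
    have hiff : q \ t = ∅ ↔ t = q := by
      constructor
      · intro h
        exact subset_antisymm ht (Finset.sdiff_eq_empty_iff_subset.mp h)
      · rintro rfl; exact Finset.sdiff_self t
    by_cases hc : t = q
    · simp [hc, Finset.sdiff_self]
    · rw [if_neg (fun h => hc (hiff.mp h)), if_neg hc, zero_mul]
  rw [Finset.sum_congr rfl key, Finset.sum_ite_eq' q.powerset q a]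
  simp

/-- Discrete Leibniz rule for mixed differences of a product. -/
lemma leibniz {ι : Type*} [DecidableEq ι] (p : Finset ι) {X : Type*} (x : Finset ι → X)
    (u w : X → ℝ) :
    ∑ q ∈ p.powerset, (-1 : ℝ) ^ (p.card - q.card) * (u (x q) * w (x q))
      = ∑ r ∈ p.powerset,
          (∑ t ∈ r.powerset, (-1 : ℝ) ^ (r.card - t.card) * w (x t)) *
          (∑ t ∈ (p \ r).powerset, (-1 : ℝ) ^ ((p \ r).card - t.card) * u (x (r ∪ t))) := by
  have hw : ∀ q ∈ p.powerset, w (x q)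
      = ∑ r ∈ q.powerset, ∑ t ∈ r.powerset, (-1 : ℝ) ^ (r.card - t.card) * w (x t) :=
    fun q _ => (sum_powerset_mobius q (fun t => w (x t))).symm
  calc ∑ q ∈ p.powerset, (-1 : ℝ) ^ (p.card - q.card) * (u (x q) * w (x q))
      = ∑ q ∈ p.powerset, ∑ r ∈ q.powerset,
          ((-1 : ℝ) ^ (p.card - q.card) * u (x q) *
            (∑ t ∈ r.powerset, (-1 : ℝ) ^ (r.card - t.card) * w (x t))) := by
        refine Finset.sum_congr rfl fun q hq => ?_
        rw [hw q hq]
        simp only [Finset.mul_sum]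
        refine Finset.sum_congr rfl fun r _ => Finset.sum_congr rfl fun t _ => by ring
    _ = ∑ r ∈ p.powerset, ∑ t ∈ (p \ r).powerset,
          ((-1 : ℝ) ^ (p.card - (r ∪ t).card) * u (x (r ∪ t)) *
            (∑ m ∈ r.powerset, (-1 : ℝ) ^ (r.card - m.card) * w (x m))) :=
        sum_powerset_swap p _
    _ = ∑ r ∈ p.powerset,
          (∑ t ∈ r.powerset, (-1 : ℝ) ^ (r.card - t.card) * w (x t)) *
          (∑ t ∈ (p \ r).powerset, (-1 : ℝ) ^ ((p \ r).card - t.card) * u (x (r ∪ t))) := by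
        refine Finset.sum_congr rfl fun r hr => ?_
        rw [mem_powerset] at hr
        rw [Finset.mul_sum]
        refine Finset.sum_congr rfl fun t ht => ?_
        rw [mem_powerset] at ht
        have hd : Disjoint r t := by
          rw [Finset.disjoint_left]
          intro y hyr hyt
          exact (Finset.mem_sdiff.mp (ht hyt)).2 hyr
        have hcard : p.card - (r ∪ t).card = (p \ r).card - t.card := by
          rw [Finset.card_union_of_disjoint hd, Finset.card_sdiff_of_subset hr]
          have h1 := Finset.card_le_card hr
          omega
        rw [hcard]
        ring

/-- The compound function. -/
noncomputable def cmpd {k d : ℕ} (g : Fin d → (Fin k → EReal) → ℝ) (S : Finset (Fin d))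
    (f : Finset (Fin d) → ℝ) (x : Fin k → EReal) : ℝ :=
  ∑ α ∈ S.powerset, f α * (∏ i ∈ α, g i x) * ∏ j ∈ S \ α, (1 - g j x)

lemma cmpd_nonneg {k d : ℕ} {g : Fin d → (Fin k → EReal) → ℝ} {S : Finset (Fin d)}
    {f : Finset (Fin d) → ℝ} {x : Fin k → EReal}
    (hg : ∀ i, g i x ∈ Set.Icc (0 : ℝ) 1)
    (hf : ∀ γ ∈ S.powerset, 0 ≤ f γ) : 0 ≤ cmpd g S f x := by
  refine Finset.sum_nonneg fun α hα => ?_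
  refine mul_nonneg (mul_nonneg (hf α hα) (Finset.prod_nonneg fun i _ => (hg i).1)) ?_
  exact Finset.prod_nonneg fun j _ => by linarith [(hg j).2]

lemma cmpd_sub {k d : ℕ} (g : Fin d → (Fin k → EReal) → ℝ) (S : Finset (Fin d))
    (f₀ f₁ : Finset (Fin d) → ℝ) (x : Fin k → EReal) :
    cmpd g S (fun α => f₁ α - f₀ α) x = cmpd g S f₁ x - cmpd g S f₀ x := by
  simp only [cmpd, ← Finset.sum_sub_distrib]
  exact Finset.sum_congr rfl fun α _ => by ring

lemma cmpd_insert {k d : ℕ} (g : Fin d → (Fin k → EReal) → ℝ) {S : Finset (Fin d)}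
    {a : Fin d} (ha : a ∉ S) (f : Finset (Fin d) → ℝ) (x : Fin k → EReal) :
    cmpd g (insert a S) f x
      = cmpd g S f x + g a x * (cmpd g S (fun α => f (insert a α)) x - cmpd g S f x) := by
  have key : cmpd g (insert a S) f x
      = (1 - g a x) * cmpd g S f x + g a x * cmpd g S (fun α => f (insert a α)) x := by
    rw [cmpd, Finset.sum_powerset_insert ha]
    have h1 : ∀ α ∈ S.powerset,
        f α * (∏ i ∈ α, g i x) * ∏ j ∈ (insert a S) \ α, (1 - g j x)
          = (1 - g a x) * (f α * (∏ i ∈ α, g i x) * ∏ j ∈ S \ α, (1 - g j x)) := by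
      intro α hα
      rw [mem_powerset] at hα
      have haα : a ∉ α := fun h => ha (hα h)
      rw [Finset.insert_sdiff_of_notMem S haα,
        Finset.prod_insert (fun h => ha (Finset.mem_sdiff.mp h).1)]
      ring
    have h2 : ∀ α ∈ S.powerset,
        f (insert a α) * (∏ i ∈ insert a α, g i x) *
            ∏ j ∈ (insert a S) \ (insert a α), (1 - g j x)
          = g a x * (f (insert a α) * (∏ i ∈ α, g i x) * ∏ j ∈ S \ α, (1 - g j x)) := by
      intro α hα
      rw [mem_powerset] at hα
      have haα : a ∉ α := fun h => ha (hα h)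
      have hsd : (insert a S) \ (insert a α) = S \ α := by
        ext y
        simp only [Finset.mem_sdiff, Finset.mem_insert, not_or]
        constructor
        · rintro ⟨hy1 | hy1, hy2, hy3⟩
          · exact absurd hy1 hy2
          · exact ⟨hy1, hy3⟩
        · rintro ⟨hy1, hy2⟩
          exact ⟨Or.inr hy1, fun h => ha (h ▸ hy1), hy2⟩
      rw [hsd, Finset.prod_insert haα]
      ring
    rw [Finset.sum_congr rfl h1, Finset.sum_congr rfl h2, ← Finset.mul_sum, ← Finset.mul_sum]
    rfl
  rw [key]; ring

lemma pbDiff_singleton {d : ℕ} (f : Finset (Fin d) → ℝ) (a : Fin d) (γ : Finset (Fin d)) :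
    pbDiff f {a} γ = f (insert a γ) - f γ := by
  rw [pbDiff, show ({a} : Finset (Fin d)) = insert a ∅ from rfl,
    Finset.sum_powerset_insert (Finset.notMem_empty a)]
  simp [Finset.union_insert]
  ring

lemma pbDiff_shift {d : ℕ} (f : Finset (Fin d) → ℝ) (a : Fin d) (β γ : Finset (Fin d)) :
    pbDiff (fun α => f (insert a α)) β γ = pbDiff f β (insert a γ) := by
  unfold pbDiff
  refine Finset.sum_congr rfl fun β' _ => ?_
  rw [Finset.insert_union]

lemma pbDiff_delta {d : ℕ} (f : Finset (Fin d) → ℝ) {a : Fin d} {β : Finset (Fin d)}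
    (haβ : a ∉ β) (γ : Finset (Fin d)) :
    pbDiff (fun α => f (insert a α) - f α) β γ = pbDiff f (insert a β) γ := by
  unfold pbDiff
  rw [Finset.sum_powerset_insert haβ, Finset.card_insert_of_notMem haβ,
    ← Finset.sum_add_distrib]
  refine Finset.sum_congr rfl fun β' hβ' => ?_
  rw [mem_powerset] at hβ'
  have hc := Finset.card_le_card hβ'
  have haβ' : a ∉ β' := fun h => haβ (hβ' h)
  have e1 : β.card + 1 - β'.card = (β.card - β'.card) + 1 := by omega
  have e2 : β.card + 1 - (insert a β').card = β.card - β'.card := by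
    rw [Finset.card_insert_of_notMem haβ']; omega
  rw [e1, e2, Finset.union_insert, pow_succ]
  dsimp only
  ring

/-- Main induction: the compound over `S` of a function that is fully `n`-increasing
relative to `S` is fully `n`-increasing. -/
lemma cmpd_fullyInc {k d : ℕ} (A : Fin k → Set EReal)
    (g : Fin d → (Fin k → EReal) → ℝ)
    (hg01 : ∀ i x, (∀ j, x j ∈ A j) → g i x ∈ Set.Icc (0 : ℝ) 1)
    (hg : ∀ i, FullyIncOnE k A (g i)) :
    ∀ S : Finset (Fin d), ∀ n : ℕ, n ≤ k →
      ∀ f : Finset (Fin d) → ℝ,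
        (∀ β ∈ S.powerset, 1 ≤ β.card → β.card ≤ n →
          ∀ γ ∈ (S \ β).powerset, 0 ≤ pbDiff f β γ) →
        FullyIncOnE n A (cmpd g S f) := by
  intro S
  induction S using Finset.induction_on with
  | empty =>
    intro n hn f _
    intro s hv hhv p hp1 hpn hmem
    have hconst : ∀ q ∈ p.powerset, (-1:ℝ) ^ (p.card - q.card) * cmpd g ∅ f (shiftE s hv q)
        = (-1:ℝ) ^ (p.card - q.card) * f ∅ := by
      intro q _
      simp [cmpd]
    have hzero : ∑ q ∈ p.powerset, (-1:ℝ) ^ (p.card - q.card) * cmpd g ∅ f (shiftE s hv q)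
        = 0 := by
      rw [Finset.sum_congr rfl hconst, ← Finset.sum_mul, sum_powerset_eps,
        if_neg (by intro h; rw [h] at hp1; simp at hp1), zero_mul]
    exact hzero.ge
  | @insert a S ha IH =>
    intro n hn f hf
    intro s hv hhv p hp1 hpn hmem
    set x : Finset (Fin k) → (Fin k → EReal) := fun q => shiftE s hv q with hx
    set f₁ : Finset (Fin d) → ℝ := fun α => f (insert a α) with hf₁def
    set w : Finset (Fin d) → ℝ := fun α => f₁ α - f α with hwdef
    -- basic membership facts
    have hmem' : ∀ q ∈ p.powerset, ∀ i, x q i ∈ A i := hmem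
    -- split the compound over insert a S
    have hsplit : ∀ q ∈ p.powerset,
        (-1:ℝ) ^ (p.card - q.card) * cmpd g (insert a S) f (x q)
          = (-1:ℝ) ^ (p.card - q.card) * cmpd g S f (x q)
            + (-1:ℝ) ^ (p.card - q.card) * (g a (x q) * cmpd g S w (x q)) := by
      intro q _
      rw [cmpd_insert g ha f (x q)]
      have hws : cmpd g S w (x q) = cmpd g S f₁ (x q) - cmpd g S f (x q) := by
        rw [hwdef]; exact cmpd_sub g S f f₁ (x q)
      rw [hws]
      ring
    rw [Finset.sum_congr rfl hsplit, Finset.sum_add_distrib]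
    -- Leibniz on the second piece
    rw [leibniz p x (g a) (cmpd g S w)]
    -- split off the r = p term
    have hsplit2 : (∑ r ∈ p.powerset,
        (∑ t ∈ r.powerset, (-1:ℝ) ^ (r.card - t.card) * cmpd g S w (x t)) *
        (∑ t ∈ (p \ r).powerset, (-1:ℝ) ^ ((p \ r).card - t.card) * g a (x (r ∪ t))))
        = (∑ r ∈ p.powerset.erase p,
        (∑ t ∈ r.powerset, (-1:ℝ) ^ (r.card - t.card) * cmpd g S w (x t)) *
        (∑ t ∈ (p \ r).powerset, (-1:ℝ) ^ ((p \ r).card - t.card) * g a (x (r ∪ t))))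
        + (∑ t ∈ p.powerset, (-1:ℝ) ^ (p.card - t.card) * cmpd g S w (x t)) * g a (x p) := by
      rw [← Finset.sum_erase_add _ _ (Finset.mem_powerset_self p)]
      congr 1
      simp [Finset.sdiff_self]
    rw [hsplit2]
    -- notation for the three main quantities
    set D0 : ℝ := ∑ q ∈ p.powerset, (-1:ℝ) ^ (p.card - q.card) * cmpd g S f (x q) with hD0
    set DWp : ℝ := ∑ t ∈ p.powerset, (-1:ℝ) ^ (p.card - t.card) * cmpd g S w (x t) with hDWp
    set D1 : ℝ := ∑ q ∈ p.powerset, (-1:ℝ) ^ (p.card - q.card) * cmpd g S f₁ (x q) with hD1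
    have hDWsub : DWp = D1 - D0 := by
      rw [hDWp, hD1, hD0, ← Finset.sum_sub_distrib]
      refine Finset.sum_congr rfl fun q _ => ?_
      have hws : cmpd g S w (x q) = cmpd g S f₁ (x q) - cmpd g S f (x q) := by
        rw [hwdef]; exact cmpd_sub g S f f₁ (x q)
      rw [hws]
      ring
    -- nonnegativity of D0
    have hf' : ∀ β ∈ S.powerset, 1 ≤ β.card → β.card ≤ n →
        ∀ γ ∈ (S \ β).powerset, 0 ≤ pbDiff f β γ := by
      intro β hβ h1 h2 γ hγ
      rw [mem_powerset] at hβ hγ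
      refine hf β (mem_powerset.mpr (hβ.trans (Finset.subset_insert a S))) h1 h2 γ
        (mem_powerset.mpr (hγ.trans (Finset.sdiff_subset_sdiff (Finset.subset_insert a S) le_rfl)))
    have hD0nn : 0 ≤ D0 := IH n hn f hf' s hv hhv p hp1 hpn hmem
    -- nonnegativity of D1
    have hf₁' : ∀ β ∈ S.powerset, 1 ≤ β.card → β.card ≤ n →
        ∀ γ ∈ (S \ β).powerset, 0 ≤ pbDiff f₁ β γ := by
      intro β hβ h1 h2 γ hγ
      rw [mem_powerset] at hβ hγ
      simp only [hf₁def]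
      rw [pbDiff_shift f a β γ]
      refine hf β (mem_powerset.mpr (hβ.trans (Finset.subset_insert a S))) h1 h2
        (insert a γ) (mem_powerset.mpr ?_)
      intro y hy
      rcases Finset.mem_insert.mp hy with hya | hy'
      · subst hya
        exact Finset.mem_sdiff.mpr ⟨Finset.mem_insert_self y S, fun h => ha (hβ h)⟩
      · have := hγ hy'
        rw [Finset.mem_sdiff] at this ⊢
        exact ⟨Finset.mem_insert_of_mem this.1, this.2⟩
    have hD1nn : 0 ≤ D1 := IH n hn f₁ hf₁' s hv hhv p hp1 hpn hmem
    -- g a at x p is in [0,1]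
    have hu : g a (x p) ∈ Set.Icc (0:ℝ) 1 :=
      hg01 a (x p) (hmem p (Finset.mem_powerset_self p))
    -- the lower-order terms are nonnegative
    have hrest : ∀ r ∈ p.powerset.erase p,
        0 ≤ (∑ t ∈ r.powerset, (-1:ℝ) ^ (r.card - t.card) * cmpd g S w (x t)) *
            (∑ t ∈ (p \ r).powerset, (-1:ℝ) ^ ((p \ r).card - t.card) * g a (x (r ∪ t))) := by
      intro r hr
      have hrp : r ⊆ p := mem_powerset.mp (Finset.mem_of_mem_erase hr)
      have hrne : r ≠ p := Finset.ne_of_mem_erase hr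
      have hrlt : r.card < p.card := Finset.card_lt_card (lt_of_le_of_ne hrp hrne)
      refine mul_nonneg ?_ ?_
      · -- DW r ≥ 0
        by_cases hre : r = ∅
        · subst hre
          simp only [Finset.powerset_empty, Finset.sum_singleton, Finset.card_empty,
            Nat.sub_zero, pow_zero, one_mul]
          refine cmpd_nonneg (fun i => hg01 i (x ∅) (hmem ∅ (Finset.empty_mem_powerset p))) ?_
          intro γ hγ
          rw [mem_powerset] at hγ
          have hwg : pbDiff f {a} γ = w γ := by
            simp only [hwdef, hf₁def, pbDiff_singleton]
          rw [← hwg]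
          refine hf {a} (mem_powerset.mpr (Finset.singleton_subset_iff.mpr
            (Finset.mem_insert_self a S))) (by simp) (by simpa using le_trans hp1 hpn) γ
            (mem_powerset.mpr ?_)
          intro y hy
          rw [Finset.mem_sdiff, Finset.mem_singleton]
          exact ⟨Finset.mem_insert_of_mem (hγ hy), fun h => ha (h ▸ hγ hy)⟩
        · -- apply IH at level n - 1 to w
          have hr1 : 1 ≤ r.card := Finset.card_pos.mpr (Finset.nonempty_iff_ne_empty.mpr hre)
          have hw' : ∀ β ∈ S.powerset, 1 ≤ β.card → β.card ≤ n - 1 →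
              ∀ γ ∈ (S \ β).powerset, 0 ≤ pbDiff w β γ := by
            intro β hβ h1 h2 γ hγ
            rw [mem_powerset] at hβ hγ
            have haβ : a ∉ β := fun h => ha (hβ h)
            simp only [hwdef, hf₁def]
            rw [pbDiff_delta f haβ γ]
            refine hf (insert a β) (mem_powerset.mpr (Finset.insert_subset_insert a hβ))
              (by simp [Finset.card_insert_of_notMem haβ])
              (by rw [Finset.card_insert_of_notMem haβ]; omega) γ (mem_powerset.mpr ?_)
            intro y hy
            have hymem := hγ hy
            rw [Finset.mem_sdiff] at hymem ⊢
            refine ⟨Finset.mem_insert_of_mem hymem.1, ?_⟩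
            intro hcon
            rcases Finset.mem_insert.mp hcon with rfl | hcon'
            · exact ha hymem.1
            · exact hymem.2 hcon'
          have := IH (n-1) (le_trans (Nat.sub_le n 1) hn) w hw' s hv hhv r hr1
            (by omega) (fun q hq => hmem q (mem_powerset.mpr
              ((mem_powerset.mp hq).trans hrp)))
          exact this
      · -- DU r ≥ 0, from full k-increasingness of g a
        have hpr1 : 1 ≤ (p \ r).card := by
          rw [Finset.card_sdiff_of_subset hrp]; omega
        have hprk : (p \ r).card ≤ k := by
          rw [Finset.card_sdiff_of_subset hrp]; omega
        have hkey := hg a (x r) hv hhv (p \ r) hpr1 hprk ?_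
        · -- rewrite the shift composition
          have hcongr : ∀ t ∈ (p \ r).powerset,
              (-1:ℝ) ^ ((p \ r).card - t.card) * g a (shiftE (x r) hv t)
                = (-1:ℝ) ^ ((p \ r).card - t.card) * g a (x (r ∪ t)) := by
            intro t ht
            rw [mem_powerset] at ht
            have hd : Disjoint r t := by
              rw [Finset.disjoint_left]
              intro y hyr hyt
              exact (Finset.mem_sdiff.mp (ht hyt)).2 hyr
            rw [hx]
            rw [shiftE_union s hv hd]
          rw [Finset.sum_congr rfl hcongr] at hkey
          exact hkey
        · intro t ht i
          rw [mem_powerset] at ht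
          have hd : Disjoint r t := by
            rw [Finset.disjoint_left]
            intro y hyr hyt
            exact (Finset.mem_sdiff.mp (ht hyt)).2 hyr
          rw [hx, shiftE_union s hv hd]
          exact hmem (r ∪ t) (mem_powerset.mpr (Finset.union_subset hrp
            (ht.trans Finset.sdiff_subset))) i
    have hrestsum : 0 ≤ ∑ r ∈ p.powerset.erase p,
        (∑ t ∈ r.powerset, (-1:ℝ) ^ (r.card - t.card) * cmpd g S w (x t)) *
        (∑ t ∈ (p \ r).powerset, (-1:ℝ) ^ ((p \ r).card - t.card) * g a (x (r ∪ t))) :=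
      Finset.sum_nonneg hrest
    have h1 : 0 ≤ (1 - g a (x p)) * D0 := mul_nonneg (by linarith [hu.2]) hD0nn
    have h2 : 0 ≤ g a (x p) * D1 := mul_nonneg hu.1 hD1nn
    nlinarith [hrestsum, hDWsub, hD0nn, hD1nn, hu.1, hu.2]

/-- Theorem 1: compounding fully `k`-increasing functions. -/
theorem compounding_fully_k_increasing (k d : ℕ) (hk : 1 ≤ k) (hkd : k ≤ d)
    (A : Fin k → Set EReal) (hA : ∀ j, (A j).Nonempty)
    (g : Fin d → (Fin k → EReal) → ℝ)
    (hg01 : ∀ i x, (∀ j, x j ∈ A j) → g i x ∈ Set.Icc (0 : ℝ) 1)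
    (hg : ∀ i, FullyIncOnE k A (g i))
    (f : Finset (Fin d) → ℝ) (hf : PBFullyInc k f) :
    FullyIncOnE k A (fun x => ∑ α : Finset (Fin d),
      f α * (∏ i ∈ α, g i x) * ∏ j ∈ αᶜ, (1 - g j x)) := by
  have key := cmpd_fullyInc A g hg01 hg Finset.univ k le_rfl f ?_
  · have heq : cmpd g Finset.univ f = (fun x => ∑ α : Finset (Fin d),
        f α * (∏ i ∈ α, g i x) * ∏ j ∈ αᶜ, (1 - g j x)) := by
      funext x
      rw [cmpd, Finset.powerset_univ]
      refine Finset.sum_congr rfl fun α _ => ?_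
      rw [Finset.compl_eq_univ_sdiff]
    rwa [heq] at key
  · intro β _ h1 h2 γ hγ
    rw [mem_powerset, Finset.subset_sdiff] at hγ
    exact hf β h1 h2 γ hγ.2
end

section
/- Let k, d ∈ ℕ with 1 ≤ k ≤ d, let A_j ⊆ ℝ̄ (extended reals) be nonempty for j = 1, …, k, and set A := A_1 × … × A_k. Let g_1, …, g_d : A → [0,1] and f : P([d]) → ℝ all be fully k-alternating. Define h : A → ℝ by h(x) := Σ_{α ⊆ [d]} f(α) · Π_{i ∈ α} g_i(x) · Π_{j ∈ [d]∖α} (1 − g_j(x)). Then h is fully k-alternating. -/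
open Finset

/-- A pseudo-Boolean function is fully `k`-alternating. -/
def PBFullyAlt {d : ℕ} (k : ℕ) (f : Finset (Fin d) → ℝ) : Prop :=
  ∀ β : Finset (Fin d), 1 ≤ β.card → β.card ≤ k →
    ∀ γ : Finset (Fin d), Disjoint γ β → (-1 : ℝ) ^ β.card * pbDiff f β γ ≤ 0

/-- `g` is fully `k'`-alternating on the product set `A = A_1 × … × A_k ⊆ ℝ̄^k`. -/
noncomputable def FullyAltOnE {k : ℕ} (k' : ℕ) (A : Fin k → Set EReal)
    (g : (Fin k → EReal) → ℝ) : Prop :=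
  ∀ (s : Fin k → EReal) (h : Fin k → ℝ), (∀ i, 0 ≤ h i) →
    ∀ p : Finset (Fin k), 1 ≤ p.card → p.card ≤ k' →
      (∀ q ∈ p.powerset, ∀ i, shiftE s h q i ∈ A i) →
      (-1 : ℝ) ^ p.card *
        (∑ q ∈ p.powerset, (-1 : ℝ) ^ (p.card - q.card) * g (shiftE s h q)) ≤ 0

namespace CompoundAux

variable {κ : Type*} [DecidableEq κ] {κ' : Type*} [DecidableEq κ']


variable {κ : Type*} [DecidableEq κ]

/-- generic discrete difference -/
def dd (u : Finset κ → ℝ) (β γ : Finset κ) : ℝ :=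
  ∑ β' ∈ β.powerset, (-1 : ℝ) ^ (β.card - β'.card) * u (γ ∪ β')

lemma dd_empty (u : Finset κ → ℝ) (γ : Finset κ) : dd u ∅ γ = u γ := by
  simp [dd]

lemma dd_insert (u : Finset κ → ℝ) {e : κ} {β : Finset κ} (he : e ∉ β) (γ : Finset κ) :
    dd u (insert e β) γ = dd u β (insert e γ) - dd u β γ := by
  unfold dd
  rw [sum_powerset_insert he, card_insert_of_notMem he]
  have h1 : ∀ β' ∈ β.powerset, (-1:ℝ)^(β.card+1-β'.card) * u (γ ∪ β')
      = -((-1:ℝ)^(β.card-β'.card) * u (γ ∪ β')) := by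
    intro β' hβ'
    have hle : β'.card ≤ β.card := card_le_card (mem_powerset.1 hβ')
    have hs : β.card + 1 - β'.card = (β.card - β'.card) + 1 := by omega
    rw [hs, pow_succ]; ring
  have h2 : ∀ β' ∈ β.powerset, (-1:ℝ)^(β.card+1-(insert e β').card) * u (γ ∪ insert e β')
      = (-1:ℝ)^(β.card-β'.card) * u (insert e γ ∪ β') := by
    intro β' hβ'
    have he' : e ∉ β' := fun h => he (mem_powerset.1 hβ' h)
    rw [card_insert_of_notMem he', Nat.add_sub_add_right, union_insert, insert_union]
  rw [sum_congr rfl h1, sum_congr rfl h2, sum_neg_distrib]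
  ring

lemma dd_comp_insert (u : Finset κ → ℝ) (e : κ) (β γ : Finset κ) :
    dd (fun q => u (insert e q)) β γ = dd u β (insert e γ) := by
  unfold dd
  exact sum_congr rfl fun β' _ => by rw [insert_union]

lemma dd_sub (u v : Finset κ → ℝ) (β γ : Finset κ) :
    dd (fun q => u q - v q) β γ = dd u β γ - dd v β γ := by
  unfold dd
  rw [← sum_sub_distrib]
  exact sum_congr rfl fun x _ => by ring

lemma dd_neg (u : Finset κ → ℝ) (β γ : Finset κ) :
    dd (fun q => -u q) β γ = - dd u β γ := by
  unfold dd
  rw [← sum_neg_distrib]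
  exact sum_congr rfl fun x _ => by ring

lemma dd_sum {ι : Type*} (I : Finset ι) (w : ι → Finset κ → ℝ) (β γ : Finset κ) :
    dd (fun q => ∑ i ∈ I, w i q) β γ = ∑ i ∈ I, dd (w i) β γ := by
  unfold dd
  simp_rw [mul_sum]
  exact sum_comm

lemma insert_sdiff_insert' {e : κ} (β β' : Finset κ) (he : e ∉ β) :
    insert e β \ insert e β' = β \ β' := by
  ext x
  simp only [mem_sdiff, mem_insert, not_or]
  constructor
  · rintro ⟨h1 | h1, h2, h3⟩
    · exact absurd h1 h2
    · exact ⟨h1, h3⟩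
  · intro hx
    exact ⟨Or.inr hx.1, fun h => he (h ▸ hx.1), hx.2⟩

lemma dd_mul (u v : Finset κ → ℝ) (β : Finset κ) : ∀ γ,
    dd (fun q => u q * v q) β γ
      = ∑ β' ∈ β.powerset, dd u β' (γ ∪ (β \ β')) * dd v (β \ β') γ := by
  induction β using Finset.induction_on with
  | empty => intro γ; simp [dd]
  | @insert e β he ih =>
    intro γ
    rw [dd_insert _ he, ih, ih, sum_powerset_insert he]
    have key : ∀ β' ∈ β.powerset,
        dd u β' (γ ∪ (insert e β \ β')) * dd v (insert e β \ β') γ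
          + dd u (insert e β') (γ ∪ (insert e β \ insert e β')) * dd v (insert e β \ insert e β') γ
        = dd u β' ((insert e γ) ∪ (β \ β')) * dd v (β \ β') (insert e γ)
          - dd u β' (γ ∪ (β \ β')) * dd v (β \ β') γ := by
      intro β' hβ'
      have he' : e ∉ β' := fun h => he (mem_powerset.1 hβ' h)
      have hesd : e ∉ β \ β' := fun h => he (mem_sdiff.1 h).1
      have h1 : insert e β \ β' = insert e (β \ β') := insert_sdiff_of_notMem _ he'
      have h2 : insert e β \ insert e β' = β \ β' := insert_sdiff_insert' β β' he
      rw [h1, h2, union_insert, ← insert_union, dd_insert v hesd, dd_insert u he',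
        insert_union]
      ring
    rw [← sum_sub_distrib, ← sum_add_distrib]
    exact (sum_congr rfl key).symm





/-- multilinear extension of a pseudo-Boolean function over index set `I` -/
def M (f : Finset κ' → ℝ) (I : Finset κ') (x : κ' → ℝ) : ℝ :=
  ∑ α ∈ I.powerset, f α * (∏ i ∈ α, x i) * ∏ j ∈ I \ α, (1 - x j)

lemma M_congr (f : Finset κ' → ℝ) (I : Finset κ') {x y : κ' → ℝ}
    (h : ∀ l ∈ I, x l = y l) : M f I x = M f I y := by
  unfold M
  refine sum_congr rfl fun α hα => ?_
  have hαI : α ⊆ I := mem_powerset.1 hα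
  congr 1
  · congr 1
    exact prod_congr rfl fun i hi => h i (hαI hi)
  · exact prod_congr rfl fun j hj => by rw [h j ((mem_sdiff.1 hj).1)]

lemma M_f_sub (g h : Finset κ' → ℝ) (I : Finset κ') (x : κ' → ℝ) :
    M (fun α => g α - h α) I x = M g I x - M h I x := by
  unfold M
  rw [← sum_sub_distrib]
  exact sum_congr rfl fun α _ => by ring

lemma M_nonneg {f : Finset κ' → ℝ} {I : Finset κ'} {x : κ' → ℝ}
    (hf : ∀ α ⊆ I, 0 ≤ f α) (hx : ∀ l ∈ I, x l ∈ Set.Icc (0:ℝ) 1) : 0 ≤ M f I x := by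
  apply sum_nonneg
  intro α hα
  have hαI : α ⊆ I := mem_powerset.1 hα
  refine mul_nonneg (mul_nonneg (hf α hαI) (prod_nonneg fun i hi => (hx i (hαI hi)).1))
    (prod_nonneg fun j hj => ?_)
  have := hx j (mem_sdiff.1 hj).1
  linarith [this.2]

lemma sum_part (I : Finset κ') (x : κ' → ℝ) :
    ∑ α ∈ I.powerset, (∏ i ∈ α, x i) * ∏ j ∈ I \ α, (1 - x j) = 1 := by
  rw [← prod_add]
  simp

lemma M_pin {i : κ'} {I : Finset κ'} (hi : i ∈ I) (f : Finset κ' → ℝ) (x : κ' → ℝ) :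
    M f I x = x i * M (fun α => f (insert i α)) (I.erase i) x
      + (1 - x i) * M f (I.erase i) x := by
  conv_lhs => rw [← insert_erase hi]
  unfold M
  rw [sum_powerset_insert (notMem_erase i I)]
  have h1 : ∑ α ∈ (I.erase i).powerset,
      f α * (∏ l ∈ α, x l) * ∏ j ∈ insert i (I.erase i) \ α, (1 - x j)
      = (1 - x i) * ∑ α ∈ (I.erase i).powerset,
          f α * (∏ l ∈ α, x l) * ∏ j ∈ I.erase i \ α, (1 - x j) := by
    rw [mul_sum]
    refine sum_congr rfl fun α hα => ?_
    have hiα : i ∉ α := fun h => (notMem_erase i I) (mem_powerset.1 hα h)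
    rw [insert_sdiff_of_notMem _ hiα, prod_insert (fun h => (notMem_erase i I) (mem_sdiff.1 h).1)]
    ring
  have h2 : ∑ α ∈ (I.erase i).powerset,
      f (insert i α) * (∏ l ∈ insert i α, x l) * ∏ j ∈ insert i (I.erase i) \ insert i α, (1 - x j)
      = x i * ∑ α ∈ (I.erase i).powerset,
          f (insert i α) * (∏ l ∈ α, x l) * ∏ j ∈ I.erase i \ α, (1 - x j) := by
    rw [mul_sum]
    refine sum_congr rfl fun α hα => ?_
    have hiα : i ∉ α := fun h => (notMem_erase i I) (mem_powerset.1 hα h)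
    rw [insert_sdiff_insert' _ _ (notMem_erase i I), prod_insert hiα]
    ring
  rw [h1, h2, add_comm]

/-- one-step difference of the pseudo-Boolean function -/
def dfi (f : Finset κ' → ℝ) (i : κ') : Finset κ' → ℝ := fun α => f (insert i α) - f α

lemma M_tel [LinearOrder κ'] : ∀ (n : ℕ) (I : Finset κ'), I.card ≤ n →
    ∀ (f : Finset κ' → ℝ) (x y : κ' → ℝ),
    M f I y - M f I x
      = ∑ i ∈ I, (y i - x i) * M (dfi f i) (I.erase i) (fun l => if l < i then y l else x l) := by
  intro n
  induction n with
  | zero =>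
    intro I hI f x y
    have : I = ∅ := card_eq_zero.1 (Nat.le_zero.1 hI)
    subst this
    simp [M]
  | succ n ih =>
    intro I hI f x y
    rcases I.eq_empty_or_nonempty with rfl | hne
    · simp [M]
    have hi0I : I.max' hne ∈ I := I.max'_mem hne
    set i0 := I.max' hne with hi0def
    set I' := I.erase i0 with hI'def
    have hI' : I'.card ≤ n := by
      rw [hI'def, card_erase_of_mem hi0I]
      have : 0 < I.card := card_pos.2 hne
      omega
    set y' := Function.update y i0 (x i0) with hy'def
    have hyl : ∀ l ∈ I', y' l = y l := fun l hl =>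
      Function.update_of_ne (ne_of_mem_erase hl) _ _
    have key1 : M f I y - M f I y'
        = (y i0 - x i0) * M (dfi f i0) I' (fun l => if l < i0 then y l else x l) := by
      rw [M_pin hi0I f y, M_pin hi0I f y']
      have e1 : M f I' y' = M f I' y := M_congr _ _ hyl
      have e2 : M (fun α => f (insert i0 α)) I' y' = M (fun α => f (insert i0 α)) I' y :=
        M_congr _ _ hyl
      have e3 : M (dfi f i0) I' (fun l => if l < i0 then y l else x l) = M (dfi f i0) I' y := by
        refine M_congr _ _ fun l hl => ?_
        rw [if_pos (lt_of_le_of_ne (I.le_max' l (mem_of_mem_erase hl)) (ne_of_mem_erase hl))]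
      rw [e1, e2, e3]
      have e4 : M (dfi f i0) I' y
          = M (fun α => f (insert i0 α)) I' y - M f I' y := M_f_sub _ _ _ _
      rw [e4, hy'def, Function.update_self]
      ring
    have key2 : M f I y' - M f I x
        = ∑ i ∈ I', (y i - x i) * M (dfi f i) (I.erase i)
            (fun l => if l < i then y l else x l) := by
      rw [M_pin hi0I f y', M_pin hi0I f x]
      have hupd : y' i0 = x i0 := by rw [hy'def, Function.update_self]
      have hA := ih I' hI' (fun α => f (insert i0 α)) x y'
      have hB := ih I' hI' f x y'
      have hstep : (y' i0 * M (fun α => f (insert i0 α)) I' y' + (1 - y' i0) * M f I' y')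
          - (x i0 * M (fun α => f (insert i0 α)) I' x + (1 - x i0) * M f I' x)
          = x i0 * (M (fun α => f (insert i0 α)) I' y' - M (fun α => f (insert i0 α)) I' x)
            + (1 - x i0) * (M f I' y' - M f I' x) := by
        rw [hupd]; ring
      rw [hstep, hA, hB, mul_sum, mul_sum, ← sum_add_distrib]
      refine sum_congr rfl fun i hi => ?_
      have hii0 : i ≠ i0 := ne_of_mem_erase hi
      have hilt : i < i0 := lt_of_le_of_ne (I.le_max' i (mem_of_mem_erase hi)) hii0
      have hy'i : y' i = y i := hyl i hi
      have hi0mem : i0 ∈ I.erase i := mem_erase.2 ⟨hii0.symm, hi0I⟩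
      rw [M_pin hi0mem (dfi f i) (fun l => if l < i then y l else x l)]
      have hmx : (if i0 < i then y i0 else x i0) = x i0 := if_neg (not_lt.2 hilt.le)
      have hee : (I.erase i).erase i0 = I'.erase i := by
        rw [hI'def, erase_right_comm]
      have hdc : (fun α => (dfi f i) (insert i0 α)) = dfi (fun α => f (insert i0 α)) i := by
        funext α
        simp only [dfi, Finset.insert_comm]
      have hcong : ∀ g : Finset κ' → ℝ,
          M g (I'.erase i) (fun l => if l < i then y' l else x l)
            = M g (I'.erase i) (fun l => if l < i then y l else x l) := by
        intro g
        refine M_congr _ _ fun l hl => ?_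
        by_cases hl' : l < i
        · rw [if_pos hl', if_pos hl', hyl l (mem_of_mem_erase hl)]
        · rw [if_neg hl', if_neg hl']
      rw [hmx, hee, hdc, hcong, hcong, hy'i]
      ring
    have hsum : ∑ i ∈ I, (y i - x i) * M (dfi f i) (I.erase i)
          (fun l => if l < i then y l else x l)
        = (y i0 - x i0) * M (dfi f i0) (I.erase i0)
            (fun l => if l < i0 then y l else x l)
          + ∑ i ∈ I', (y i - x i) * M (dfi f i) (I.erase i)
              (fun l => if l < i then y l else x l) :=
      (Finset.add_sum_erase I _ hi0I).symm
    rw [hsum, ← key1, ← key2]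
    ring







/-- discrete complete monotonicity on the cube `P(S)` -/
def CMc (S : Finset κ) (u : Finset κ → ℝ) : Prop :=
  ∀ β γ : Finset κ, β ⊆ S → γ ⊆ S → Disjoint γ β → 0 ≤ (-1 : ℝ) ^ β.card * dd u β γ

lemma CMc_mul {S : Finset κ} {u v : Finset κ → ℝ} (hu : CMc S u) (hv : CMc S v) :
    CMc S (fun q => u q * v q) := by
  intro β γ hβ hγ hd
  rw [dd_mul, mul_sum]
  apply sum_nonneg
  intro β' hβ'
  have hβ'β : β' ⊆ β := mem_powerset.1 hβ'
  have hcard : (β \ β').card + β'.card = β.card := card_sdiff_add_card_eq_card hβ'β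
  have hpow : (-1:ℝ)^β.card = (-1)^β'.card * (-1)^(β \ β').card := by
    rw [← pow_add, ← hcard, add_comm]
  have h1 : 0 ≤ (-1:ℝ)^β'.card * dd u β' (γ ∪ (β \ β')) :=
    hu β' (γ ∪ (β \ β')) (hβ'β.trans hβ) (union_subset hγ ((sdiff_subset).trans hβ))
      (disjoint_union_left.2 ⟨(hd.mono_right hβ'β), sdiff_disjoint⟩)
  have h2 : 0 ≤ (-1:ℝ)^(β \ β').card * dd v (β \ β') γ :=
    hv _ γ ((sdiff_subset).trans hβ) hγ (hd.mono_right sdiff_subset)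
  rw [hpow]
  calc (0:ℝ) ≤ ((-1:ℝ)^β'.card * dd u β' (γ ∪ (β \ β'))) *
      ((-1:ℝ)^(β \ β').card * dd v (β \ β') γ) := mul_nonneg h1 h2
    _ = (-1:ℝ)^β'.card * (-1)^(β \ β').card * (dd u β' (γ ∪ (β \ β')) * dd v (β \ β') γ) := by
      ring

lemma CMc_sum {ι : Type*} {S : Finset κ} {I : Finset ι} {w : ι → Finset κ → ℝ}
    (h : ∀ i ∈ I, CMc S (w i)) : CMc S (fun q => ∑ i ∈ I, w i q) := by
  intro β γ hβ hγ hd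
  rw [dd_sum, mul_sum]
  exact sum_nonneg fun i hi => h i hi β γ hβ hγ hd











lemma compound_CM [LinearOrder κ'] : ∀ (n : ℕ) (S : Finset κ), S.card ≤ n → ∀ (m : ℕ), S.card ≤ m →
    ∀ (I : Finset κ') (F : Finset κ' → ℝ),
    (∀ β γ : Finset κ', β ⊆ I → γ ⊆ I → β.card ≤ m → Disjoint γ β →
      0 ≤ (-1:ℝ)^β.card * dd F β γ) →
    ∀ t : κ' → Finset κ → ℝ,
    (∀ l ∈ I, ∀ γ ⊆ S, t l γ ∈ Set.Icc (0:ℝ) 1) →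
    (∀ l ∈ I, ∀ β γ : Finset κ, β ⊆ S → γ ⊆ S → Disjoint γ β → β.Nonempty →
      (-1:ℝ)^β.card * dd (t l) β γ ≤ 0) →
    CMc S (fun q => M F I (fun l => t l q)) := by
  intro n
  induction n with
  | zero =>
    intro S hS m _ I F hF t ht01 _
    have hSe : S = ∅ := card_eq_zero.1 (Nat.le_zero.1 hS)
    subst hSe
    intro β γ hβ hγ _
    rw [subset_empty.1 hβ, dd_empty]
    simp only [card_empty, pow_zero, one_mul]
    exact M_nonneg (fun α hα => by
        have := hF ∅ α (empty_subset _) hα (by simp) (disjoint_empty_right _)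
        rwa [dd_empty, card_empty, pow_zero, one_mul] at this)
      (fun l hl => ht01 l hl γ hγ)
  | succ n ih =>
    intro S hS m hm I F hF t ht01 htalt
    intro β γ hβ hγ hd
    rcases β.eq_empty_or_nonempty with rfl | hne
    · rw [dd_empty]
      simp only [card_empty, pow_zero, one_mul]
      exact M_nonneg (fun α hα => by
          have := hF ∅ α (empty_subset _) hα (by simp) (disjoint_empty_right _)
          rwa [dd_empty, card_empty, pow_zero, one_mul] at this)
        (fun l hl => ht01 l hl γ hγ)
    obtain ⟨e, he⟩ := hne
    have heS : e ∈ S := hβ he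
    have heγ : e ∉ γ := fun h => (disjoint_left.1 hd h) he
    set S' := S.erase e with hS'def
    set β' := β.erase e with hβ'def
    have heβ' : e ∉ β' := notMem_erase _ _
    have hβeq : β = insert e β' := (insert_erase he).symm
    have hβ'S' : β' ⊆ S' := erase_subset_erase e hβ
    have hγS' : γ ⊆ S' := fun x hx => mem_erase.2 ⟨fun hxe => heγ (hxe ▸ hx), hγ hx⟩
    have hdisj' : Disjoint γ β' := hd.mono_right (erase_subset _ _)
    have hS'n : S'.card ≤ n := by
      rw [hS'def, card_erase_of_mem heS]
      have : 0 < S.card := card_pos.2 ⟨e, heS⟩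
      omega
    have hm1 : 1 ≤ m := le_trans (card_pos.2 ⟨e, heS⟩) hm
    have hS'm : S'.card ≤ m - 1 := by
      rw [hS'def, card_erase_of_mem heS]
      omega
    -- the inner objects
    set C : Finset κ → ℝ := fun q => M F I (fun l => t l q) with hCdef
    have hddC : dd C β γ = dd (fun q => C (insert e q) - C q) β' γ := by
      rw [hβeq, dd_insert C heβ', dd_sub, dd_comp_insert]
    -- telescoping
    have htel : ∀ q : Finset κ, C (insert e q) - C q
        = ∑ i ∈ I, (t i (insert e q) - t i q) * M (dfi F i) (I.erase i)
            (fun l => if l < i then t l (insert e q) else t l q) := fun q =>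
      M_tel I.card I le_rfl F (fun l => t l q) (fun l => t l (insert e q))
    have hnegtel : ∀ q : Finset κ, -(C (insert e q) - C q)
        = ∑ i ∈ I, (t i (insert e q) - t i q) * M (fun α => F α - F (insert i α)) (I.erase i)
            (fun l => if l < i then t l (insert e q) else t l q) := by
      intro q
      rw [htel q, ← sum_neg_distrib]
      refine sum_congr rfl fun i _ => ?_
      have : M (fun α => F α - F (insert i α)) (I.erase i)
            (fun l => if l < i then t l (insert e q) else t l q)
          = - M (dfi F i) (I.erase i)
            (fun l => if l < i then t l (insert e q) else t l q) := by
        rw [show (dfi F i) = (fun α => F (insert i α) - F α) from rfl, M_f_sub, M_f_sub]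
        ring
      rw [this]
      ring
    -- each summand is CM on S'
    have hsummand : ∀ i ∈ I, CMc S' (fun q => (t i (insert e q) - t i q) *
        M (fun α => F α - F (insert i α)) (I.erase i)
          (fun l => if l < i then t l (insert e q) else t l q)) := by
      intro i hiI
      apply CMc_mul
      · -- the increment is CM
        intro β'' γ'' hβ'' hγ'' hd''
        have heβ'' : e ∉ β'' := fun h => (notMem_erase e S) (hβ'' h)
        have heγ'' : e ∉ γ'' := fun h => (notMem_erase e S) (hγ'' h)
        have h1 : dd (fun q => t i (insert e q) - t i q) β'' γ''
            = dd (t i) (insert e β'') γ'' := by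
          rw [dd_sub, dd_comp_insert, dd_insert (t i) heβ'']
        rw [h1]
        have halt := htalt i hiI (insert e β'') γ''
          (insert_subset heS (fun x hx => mem_of_mem_erase (hβ'' hx)))
          (fun x hx => mem_of_mem_erase (hγ'' hx))
          (disjoint_insert_right.2 ⟨heγ'', hd''⟩) (insert_nonempty _ _)
        rw [card_insert_of_notMem heβ'', pow_succ] at halt
        nlinarith [halt]
      · -- the compound with F_i is CM on S' by induction
        have hFi : ∀ β3 γ3 : Finset κ', β3 ⊆ I.erase i → γ3 ⊆ I.erase i →
            β3.card ≤ m - 1 → Disjoint γ3 β3 →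
            0 ≤ (-1:ℝ)^β3.card * dd (fun α => F α - F (insert i α)) β3 γ3 := by
          intro β3 γ3 hβ3 hγ3 hc3 hd3
          have hiβ3 : i ∉ β3 := fun h => (notMem_erase i I) (hβ3 h)
          have hiγ3 : i ∉ γ3 := fun h => (notMem_erase i I) (hγ3 h)
          have h2 : dd (fun α => F α - F (insert i α)) β3 γ3
              = - dd F (insert i β3) γ3 := by
            rw [dd_sub, dd_comp_insert, dd_insert F hiβ3]
            ring
          rw [h2]
          have := hF (insert i β3) γ3
            (insert_subset hiI (fun x hx => mem_of_mem_erase (hβ3 hx)))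
            (fun x hx => mem_of_mem_erase (hγ3 hx))
            (by rw [card_insert_of_notMem hiβ3]; omega)
            (disjoint_insert_right.2 ⟨hiγ3, hd3⟩)
          rw [card_insert_of_notMem hiβ3, pow_succ] at this
          nlinarith [this]
        have hmix01 : ∀ l ∈ I.erase i, ∀ γ'' ⊆ S',
            (if l < i then t l (insert e γ'') else t l γ'') ∈ Set.Icc (0:ℝ) 1 := by
          intro l hl γ'' hγ''
          by_cases hl' : l < i
          · rw [if_pos hl']
            exact ht01 l (mem_of_mem_erase hl) (insert e γ'')
              (insert_subset heS (fun x hx => mem_of_mem_erase (hγ'' hx)))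
          · rw [if_neg hl']
            exact ht01 l (mem_of_mem_erase hl) γ'' (fun x hx => mem_of_mem_erase (hγ'' hx))
        have hmixalt : ∀ l ∈ I.erase i, ∀ β'' γ'' : Finset κ, β'' ⊆ S' → γ'' ⊆ S' →
            Disjoint γ'' β'' → β''.Nonempty →
            (-1:ℝ)^β''.card * dd (fun q => if l < i then t l (insert e q) else t l q) β'' γ'' ≤ 0 := by
          intro l hl β'' γ'' hβ'' hγ'' hd'' hne''
          by_cases hl' : l < i
          · simp only [if_pos hl']
            rw [dd_comp_insert]
            exact htalt l (mem_of_mem_erase hl) β'' (insert e γ'')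
              (fun x hx => mem_of_mem_erase (hβ'' hx))
              (insert_subset heS (fun x hx => mem_of_mem_erase (hγ'' hx)))
              (disjoint_insert_left.2 ⟨fun h => (notMem_erase e S) (hβ'' h), hd''⟩) hne''
          · simp only [if_neg hl']
            exact htalt l (mem_of_mem_erase hl) β'' γ''
              (fun x hx => mem_of_mem_erase (hβ'' hx))
              (fun x hx => mem_of_mem_erase (hγ'' hx)) hd'' hne''
        exact ih S' hS'n (m-1) hS'm (I.erase i) (fun α => F α - F (insert i α)) hFi
          (fun l q => if l < i then t l (insert e q) else t l q) hmix01 hmixalt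
    have hCM' : CMc S' (fun q => ∑ i ∈ I, (t i (insert e q) - t i q) *
        M (fun α => F α - F (insert i α)) (I.erase i)
          (fun l => if l < i then t l (insert e q) else t l q)) := CMc_sum hsummand
    have h := hCM' β' γ hβ'S' hγS' hdisj'
    have hfun : (fun q => C (insert e q) - C q)
        = fun q => -(∑ i ∈ I, (t i (insert e q) - t i q) *
            M (fun α => F α - F (insert i α)) (I.erase i)
              (fun l => if l < i then t l (insert e q) else t l q)) := by
      funext q
      rw [← hnegtel q]
      ring
    rw [hddC, hfun, dd_neg, hβeq, card_insert_of_notMem heβ', pow_succ]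
    nlinarith [h]










lemma alt_sum_zero (β : Finset κ) (hne : β.Nonempty) :
    ∑ β' ∈ β.powerset, (-1:ℝ)^(β.card - β'.card) = 0 := by
  have h : ∀ β' ∈ β.powerset, (-1:ℝ)^(β.card - β'.card)
      = (-1)^β.card * ((-1)^β'.card * 1) := by
    intro β' hβ'
    have hle : β'.card ≤ β.card := card_le_card (mem_powerset.1 hβ')
    have hexp : β.card + β'.card = (β.card - β'.card) + 2*β'.card := by omega
    have : (-1:ℝ)^(β.card + β'.card) = (-1)^(β.card - β'.card) := by
      rw [hexp, pow_add, pow_mul]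
      norm_num
    rw [← this, pow_add, mul_one]
  rw [sum_congr rfl h, ← mul_sum]
  have h0 : ∑ β' ∈ β.powerset, (-1:ℝ)^β'.card * 1 = 0 := by
    have hp := prod_add (fun _ : κ => (-1:ℝ)) (fun _ => 1) β
    simp only [neg_add_cancel, prod_const, prod_const_one, one_pow, mul_one] at hp
    simp only [mul_one]
    rw [← hp]
    exact zero_pow (Nat.pos_iff_ne_zero.1 (card_pos.2 hne))
  rw [h0, mul_zero]


end CompoundAux


open CompoundAux in
/-- Theorem 2: compounding fully `k`-alternating functions. -/
theorem compounding_fully_k_alternating (k d : ℕ) (hk : 1 ≤ k) (hkd : k ≤ d)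
    (A : Fin k → Set EReal) (hA : ∀ j, (A j).Nonempty)
    (g : Fin d → (Fin k → EReal) → ℝ)
    (hg01 : ∀ i x, (∀ j, x j ∈ A j) → g i x ∈ Set.Icc (0 : ℝ) 1)
    (hg : ∀ i, FullyAltOnE k A (g i))
    (f : Finset (Fin d) → ℝ) (hf : PBFullyAlt k f) :
    FullyAltOnE k A (fun x => ∑ α : Finset (Fin d),
      f α * (∏ i ∈ α, g i x) * ∏ j ∈ αᶜ, (1 - g j x)) := by
  intro s0 hv hh0 p hp1 hpk hmem
  classical
  set t : Fin d → Finset (Fin k) → ℝ := fun l q => g l (shiftE s0 hv q) with htdef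
  have shift_shift : ∀ (γ q : Finset (Fin k)), Disjoint γ q →
      shiftE (shiftE s0 hv γ) hv q = shiftE s0 hv (γ ∪ q) := by
    intro γ q hd
    funext i
    unfold shiftE
    by_cases h1 : i ∈ γ
    · have h2 : i ∉ q := disjoint_left.1 hd h1
      simp [h1, h2]
    · by_cases h2 : i ∈ q
      · simp [h1, h2]
      · simp [h1, h2]
  have hbd : ∀ l ∈ (univ : Finset (Fin d)), ∀ γ ⊆ p, t l γ ∈ Set.Icc (0:ℝ) 1 := by
    intro l _ γ hγ
    exact hg01 l _ (fun j => hmem γ (mem_powerset.2 hγ) j)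
  have hAlt : ∀ l ∈ (univ : Finset (Fin d)), ∀ β γ : Finset (Fin k),
      β ⊆ p → γ ⊆ p → Disjoint γ β → β.Nonempty →
      (-1:ℝ)^β.card * dd (t l) β γ ≤ 0 := by
    intro l _ β γ hβ hγ hd hne
    have h1 : 1 ≤ β.card := card_pos.2 hne
    have h2 : β.card ≤ k := le_trans (card_le_card hβ) hpk
    have hmem' : ∀ q ∈ β.powerset, ∀ i, shiftE (shiftE s0 hv γ) hv q i ∈ A i := by
      intro q hq i
      rw [shift_shift γ q (hd.mono_right (mem_powerset.1 hq))]
      exact hmem (γ ∪ q) (mem_powerset.2 (union_subset hγ ((mem_powerset.1 hq).trans hβ))) i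
    have hkey := hg l (shiftE s0 hv γ) hv hh0 β h1 h2 hmem'
    have heq : ∑ q ∈ β.powerset, (-1:ℝ)^(β.card - q.card) * g l (shiftE (shiftE s0 hv γ) hv q)
        = dd (t l) β γ := by
      refine sum_congr rfl fun q hq => ?_
      rw [shift_shift γ q (hd.mono_right (mem_powerset.1 hq))]
    rw [heq] at hkey
    exact hkey
  set c : ℝ := ∑ α : Finset (Fin d), |f α| with hcdef
  have hc : ∀ α, f α ≤ c := fun α => by
    rw [hcdef]
    exact le_trans (le_abs_self _)
      (single_le_sum (f := fun α => |f α|) (fun _ _ => abs_nonneg _) (mem_univ α))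
  set F : Finset (Fin d) → ℝ := fun α => c - f α with hFdef
  have hF : ∀ β γ : Finset (Fin d), β ⊆ univ → γ ⊆ univ → β.card ≤ k → Disjoint γ β →
      0 ≤ (-1:ℝ)^β.card * dd F β γ := by
    intro β γ _ _ hcard hd
    rcases β.eq_empty_or_nonempty with rfl | hne
    · rw [dd_empty]
      simp only [card_empty, pow_zero, one_mul, hFdef]
      linarith [hc γ]
    · have h1 : dd F β γ = - dd f β γ := by
        unfold dd
        have hcalc : ∑ β' ∈ β.powerset, (-1:ℝ)^(β.card-β'.card) * F (γ ∪ β')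
            = (∑ β' ∈ β.powerset, (-1:ℝ)^(β.card-β'.card)) * c
              - ∑ β' ∈ β.powerset, (-1:ℝ)^(β.card-β'.card) * f (γ ∪ β') := by
          rw [sum_mul, ← sum_sub_distrib]
          exact sum_congr rfl fun β' _ => by rw [hFdef]; ring
        rw [hcalc, alt_sum_zero β hne]
        ring
      rw [h1]
      have h2 := hf β (card_pos.2 hne) hcard γ hd
      have h3 : pbDiff f β γ = dd f β γ := rfl
      rw [h3] at h2
      nlinarith [h2]
  have hCM := compound_CM p.card p le_rfl k hpk univ F hF t hbd hAlt
  have hC := hCM p ∅ (Finset.Subset.refl p) (empty_subset p) (disjoint_empty_left p)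
  have hdec : ∀ q : Finset (Fin k), M F univ (fun l => t l q)
      = c - ∑ α : Finset (Fin d),
          f α * (∏ i ∈ α, g i (shiftE s0 hv q)) * ∏ j ∈ αᶜ, (1 - g j (shiftE s0 hv q)) := by
    intro q
    have h1 : (∑ α : Finset (Fin d),
          f α * (∏ i ∈ α, g i (shiftE s0 hv q)) * ∏ j ∈ αᶜ, (1 - g j (shiftE s0 hv q)))
        = ∑ α ∈ (univ : Finset (Fin d)).powerset,
            f α * (∏ i ∈ α, t i q) * ∏ j ∈ univ \ α, (1 - t j q) := by
      rw [powerset_univ]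
      exact sum_congr rfl fun α _ => by rw [compl_eq_univ_sdiff]
    have hsplit : M F univ (fun l => t l q)
        = c * (∑ α ∈ (univ : Finset (Fin d)).powerset,
            (∏ i ∈ α, t i q) * ∏ j ∈ univ \ α, (1 - t j q))
          - ∑ α ∈ (univ : Finset (Fin d)).powerset,
              f α * (∏ i ∈ α, t i q) * ∏ j ∈ univ \ α, (1 - t j q) := by
      unfold M
      rw [mul_sum, ← sum_sub_distrib]
      exact sum_congr rfl fun α _ => by rw [hFdef]; ring
    rw [hsplit, sum_part, h1]
    ring
  have hdd : dd (fun q => M F univ (fun l => t l q)) p ∅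
      = - ∑ q ∈ p.powerset, (-1:ℝ)^(p.card - q.card) * (∑ α : Finset (Fin d),
          f α * (∏ i ∈ α, g i (shiftE s0 hv q)) * ∏ j ∈ αᶜ, (1 - g j (shiftE s0 hv q))) := by
    unfold dd
    have hterm : ∀ q ∈ p.powerset, (-1:ℝ)^(p.card - q.card) * (M F univ (fun l => t l (∅ ∪ q)))
        = (-1:ℝ)^(p.card - q.card) * c - (-1:ℝ)^(p.card - q.card) * (∑ α : Finset (Fin d),
            f α * (∏ i ∈ α, g i (shiftE s0 hv q)) * ∏ j ∈ αᶜ, (1 - g j (shiftE s0 hv q))) := by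
      intro q _
      rw [empty_union, hdec q]
      ring
    rw [sum_congr rfl hterm, sum_sub_distrib, ← sum_mul,
      alt_sum_zero p (card_pos.1 (lt_of_lt_of_le one_pos hp1))]
    ring
  rw [hdd] at hC
  simp only []
  nlinarith [hC]
end

section
/- Let f : P([d]) → ℝ be a pseudo-Boolean function, let f̃ be its multilinear extension, and let 1 ≤ k ≤ d. Then f is fully k-increasing (as a pseudo-Boolean function) if and only if f̃ is fully k-increasing on [0,1]^d. -/
open Finset

/-- The shifted point `s + q ⊙ h` in `ℝ^k`. -/
def shiftR {k : ℕ} (s h : Fin k → ℝ) (q : Finset (Fin k)) : Fin k → ℝ :=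
  fun i => s i + (if i ∈ q then h i else 0)

/-- `g` is fully `k'`-increasing on the product set `A = A_1 × … × A_k ⊆ ℝ^k`. -/
def FullyIncOnR {k : ℕ} (k' : ℕ) (A : Fin k → Set ℝ) (g : (Fin k → ℝ) → ℝ) : Prop :=
  ∀ (s h : Fin k → ℝ), (∀ i, 0 ≤ h i) →
    ∀ p : Finset (Fin k), 1 ≤ p.card → p.card ≤ k' →
      (∀ q ∈ p.powerset, ∀ i, shiftR s h q i ∈ A i) →
      0 ≤ ∑ q ∈ p.powerset, (-1 : ℝ) ^ (p.card - q.card) * g (shiftR s h q)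

/-- The multilinear extension of a pseudo-Boolean function. -/
def mle {d : ℕ} (f : Finset (Fin d) → ℝ) (x : Fin d → ℝ) : ℝ :=
  ∑ α : Finset (Fin d), f α * (∏ i ∈ α, x i) * ∏ j ∈ αᶜ, (1 - x j)

lemma alt_sum {d : ℕ} (p : Finset (Fin d)) (A B : Fin d → ℝ) :
    ∑ q ∈ p.powerset, (-1 : ℝ) ^ (p.card - q.card) * ∏ i, (if i ∈ q then A i else B i)
      = (∏ i ∈ p, (A i - B i)) * ∏ i ∈ pᶜ, B i := by
  have h1 : ∀ q ∈ p.powerset, (∏ i, (if i ∈ q then A i else B i))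
      = ((∏ i ∈ q, A i) * ∏ i ∈ p \ q, B i) * ∏ i ∈ pᶜ, B i := by
    intro q hq
    rw [mem_powerset] at hq
    rw [← Finset.prod_mul_prod_compl p (fun i => if i ∈ q then A i else B i)]
    congr 1
    · rw [← Finset.prod_sdiff hq, mul_comm]
      congr 1
      · exact Finset.prod_congr rfl fun i hi => if_pos hi
      · exact Finset.prod_congr rfl fun i hi => if_neg (mem_sdiff.mp hi).2
    · exact Finset.prod_congr rfl fun i hi =>
        if_neg (fun h => (mem_compl.mp hi) (hq h))
  rw [Finset.sum_congr rfl fun q hq => by rw [h1 q hq]]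
  have h2 : ∀ q ∈ p.powerset, (-1 : ℝ) ^ (p.card - q.card) * (((∏ i ∈ q, A i) * ∏ i ∈ p \ q, B i) * ∏ i ∈ pᶜ, B i)
      = ((∏ i ∈ q, A i) * ∏ i ∈ p \ q, (-B i)) * ∏ i ∈ pᶜ, B i := by
    intro q hq
    rw [mem_powerset] at hq
    have : ∏ i ∈ p \ q, (-B i) = (-1 : ℝ) ^ (p \ q).card * ∏ i ∈ p \ q, B i := by
      rw [← Finset.prod_const, ← Finset.prod_mul_distrib]
      simp
    rw [this, card_sdiff_of_subset hq]
    ring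
  rw [Finset.sum_congr rfl h2, ← Finset.sum_mul, ← Finset.prod_add]
  simp [sub_eq_add_neg]

lemma per_alpha {d : ℕ} (s h : Fin d → ℝ) (p α : Finset (Fin d)) :
    ∑ q ∈ p.powerset, (-1 : ℝ) ^ (p.card - q.card) *
        ((∏ i ∈ α, shiftR s h q i) * ∏ j ∈ αᶜ, (1 - shiftR s h q j))
      = ((-1 : ℝ) ^ ((p \ α).card) * ∏ i ∈ p, h i) *
          ((∏ i ∈ α \ p, s i) * ∏ j ∈ (α ∪ p)ᶜ, (1 - s j)) := by
  set A : Fin d → ℝ := fun i => if i ∈ α then s i + h i else 1 - (s i + h i) with hA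
  set B : Fin d → ℝ := fun i => if i ∈ α then s i else 1 - s i with hB
  have key : ∀ q : Finset (Fin d),
      (∏ i ∈ α, shiftR s h q i) * ∏ j ∈ αᶜ, (1 - shiftR s h q j)
        = ∏ i, (if i ∈ q then A i else B i) := by
    intro q
    rw [← Finset.prod_mul_prod_compl α (fun i => if i ∈ q then A i else B i)]
    congr 1
    · refine Finset.prod_congr rfl fun i hi => ?_
      simp only [hA, hB, shiftR, if_pos hi]
      by_cases hiq : i ∈ q <;> simp [hiq]
    · refine Finset.prod_congr rfl fun i hi => ?_
      rw [mem_compl] at hi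
      simp only [hA, hB, shiftR, if_neg hi]
      by_cases hiq : i ∈ q <;> simp [hiq] <;> ring
  rw [Finset.sum_congr rfl fun q _ => by rw [key q], alt_sum]
  have hAB : ∏ i ∈ p, (A i - B i) = (-1 : ℝ) ^ ((p \ α).card) * ∏ i ∈ p, h i := by
    have : ∀ i ∈ p, A i - B i = (if i ∈ α then h i else -h i) := by
      intro i _
      simp only [hA, hB]
      by_cases hi : i ∈ α <;> simp [hi] <;> ring
    have e0 : p \ (p ∩ α) = p \ α := by ext i; by_cases hi : i ∈ α <;> simp [hi]
    have h1 : ∏ i ∈ p \ α, (if i ∈ α then h i else -h i) = ∏ i ∈ p \ α, (-h i) :=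
      Finset.prod_congr rfl fun i hi => if_neg (mem_sdiff.mp hi).2
    have h2 : ∏ i ∈ p ∩ α, (if i ∈ α then h i else -h i) = ∏ i ∈ p ∩ α, h i :=
      Finset.prod_congr rfl fun i hi => if_pos (mem_inter.mp hi).2
    have h3 : ∏ i ∈ p \ α, (-h i) = (-1 : ℝ) ^ ((p \ α).card) * ∏ i ∈ p \ α, h i := by
      rw [← Finset.prod_const, ← Finset.prod_mul_distrib]
      simp
    have hsplit : (∏ i ∈ p \ α, h i) * ∏ i ∈ p ∩ α, h i = ∏ i ∈ p, h i := by
      rw [← e0]; exact Finset.prod_sdiff inter_subset_left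
    rw [Finset.prod_congr rfl this, ← Finset.prod_sdiff (inter_subset_left (s₁ := p) (s₂ := α)),
      e0, h1, h2, h3, ← hsplit]
    ring
  have hBc : ∏ i ∈ pᶜ, B i = (∏ i ∈ α \ p, s i) * ∏ j ∈ (α ∪ p)ᶜ, (1 - s j) := by
    have hsub : pᶜ ∩ α ⊆ pᶜ := inter_subset_left
    rw [← Finset.prod_sdiff hsub]
    have e1 : pᶜ ∩ α = α \ p := by ext i; simp [mem_sdiff, and_comm]
    have e2 : pᶜ \ (pᶜ ∩ α) = (α ∪ p)ᶜ := by ext i; simp [mem_sdiff]; tauto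
    rw [e2, e1]
    have h1 : ∏ i ∈ α \ p, B i = ∏ i ∈ α \ p, s i :=
      Finset.prod_congr rfl fun i hi => if_pos (mem_sdiff.mp hi).1
    have h2 : ∏ i ∈ (α ∪ p)ᶜ, B i = ∏ i ∈ (α ∪ p)ᶜ, (1 - s i) :=
      Finset.prod_congr rfl fun i hi => if_neg (by
        rw [mem_compl, mem_union] at hi; tauto)
    rw [h1, h2]
    ring
  rw [hAB, hBc]

lemma diff_mle {d : ℕ} (f : Finset (Fin d) → ℝ) (s h : Fin d → ℝ) (p : Finset (Fin d)) :
    ∑ q ∈ p.powerset, (-1 : ℝ) ^ (p.card - q.card) * mle f (shiftR s h q)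
      = (∏ i ∈ p, h i) * ∑ γ ∈ pᶜ.powerset,
          ((∏ i ∈ γ, s i) * ∏ j ∈ pᶜ \ γ, (1 - s j)) * pbDiff f p γ := by
  have lhs1 : ∑ q ∈ p.powerset, (-1 : ℝ) ^ (p.card - q.card) * mle f (shiftR s h q)
      = ∑ α : Finset (Fin d), f α * (((-1 : ℝ) ^ ((p \ α).card) * ∏ i ∈ p, h i) *
          ((∏ i ∈ α \ p, s i) * ∏ j ∈ (α ∪ p)ᶜ, (1 - s j))) := by
    simp only [mle, Finset.mul_sum]
    rw [Finset.sum_comm]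
    refine Finset.sum_congr rfl fun α _ => ?_
    rw [← per_alpha s h p α, Finset.mul_sum]
    exact Finset.sum_congr rfl fun q _ => by ring
  rw [lhs1]
  have reind : ∑ α : Finset (Fin d), f α * (((-1 : ℝ) ^ ((p \ α).card) * ∏ i ∈ p, h i) *
          ((∏ i ∈ α \ p, s i) * ∏ j ∈ (α ∪ p)ᶜ, (1 - s j)))
      = ∑ x ∈ pᶜ.powerset ×ˢ p.powerset, f (x.1 ∪ x.2) *
          (((-1 : ℝ) ^ (p.card - x.2.card) * ∏ i ∈ p, h i) *
            ((∏ i ∈ x.1, s i) * ∏ j ∈ pᶜ \ x.1, (1 - s j))) := by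
    refine Finset.sum_nbij' (fun α => (α \ p, α ∩ p)) (fun x => x.1 ∪ x.2) ?_ ?_ ?_ ?_ ?_
    · intro α _
      rw [Finset.mem_product, mem_powerset, mem_powerset]
      exact ⟨fun i hi => mem_compl.mpr (mem_sdiff.mp hi).2, inter_subset_right⟩
    · intro x _; exact mem_univ _
    · intro α _
      exact sdiff_union_inter α p
    · intro x hx
      rw [Finset.mem_product, mem_powerset, mem_powerset] at hx
      obtain ⟨h1, h2⟩ := hx
      have hx1 : ∀ i ∈ x.1, i ∉ p := fun i hi => mem_compl.mp (h1 hi)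
      have hx2 : ∀ i ∈ x.2, i ∈ p := fun i hi => h2 hi
      have e1 : (x.1 ∪ x.2) \ p = x.1 := by
        ext i
        simp only [mem_sdiff, mem_union]
        constructor
        · rintro ⟨hi | hi, hnp⟩
          · exact hi
          · exact absurd (hx2 _ hi) hnp
        · intro hi; exact ⟨Or.inl hi, hx1 _ hi⟩
      have e2 : (x.1 ∪ x.2) ∩ p = x.2 := by
        ext i
        simp only [mem_inter, mem_union]
        constructor
        · rintro ⟨hi | hi, hp⟩
          · exact absurd hp (hx1 _ hi)
          · exact hi
        · intro hi; exact ⟨Or.inr hi, hx2 _ hi⟩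
      simp only [e1, e2]
    · intro α _
      have c1 : (p \ α).card = p.card - (α ∩ p).card := by
        rw [inter_comm, ← Finset.card_inter_add_card_sdiff p α]
        omega
      have c2 : α \ p ∪ α ∩ p = α := sdiff_union_inter α p
      have c3 : (α ∪ p)ᶜ = pᶜ \ (α \ p) := by
        ext i
        simp only [mem_compl, mem_union, mem_sdiff]
        tauto
      rw [c1, c2, c3]
  rw [reind, Finset.sum_product, Finset.mul_sum]
  refine Finset.sum_congr rfl fun γ _ => ?_
  rw [pbDiff, Finset.mul_sum, Finset.mul_sum]
  exact Finset.sum_congr rfl fun β _ => by ring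

lemma mle_indicator {d : ℕ} (f : Finset (Fin d) → ℝ) (σ : Finset (Fin d)) :
    mle f (fun i => if i ∈ σ then (1 : ℝ) else 0) = f σ := by
  rw [mle, Finset.sum_eq_single σ]
  · have h1 : ∏ i ∈ σ, (if i ∈ σ then (1 : ℝ) else 0) = 1 :=
      Finset.prod_eq_one fun i hi => if_pos hi
    have h2 : ∏ j ∈ σᶜ, (1 - if j ∈ σ then (1 : ℝ) else 0) = 1 :=
      Finset.prod_eq_one fun j hj => by rw [if_neg (mem_compl.mp hj)]; ring
    rw [h1, h2]; ring
  · intro α _ hne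
    by_cases hsub : α ⊆ σ
    · obtain ⟨i, hiσ, hiα⟩ := Finset.exists_of_ssubset (Finset.ssubset_iff_subset_ne.mpr ⟨hsub, hne⟩)
      have : ∏ j ∈ αᶜ, (1 - if j ∈ σ then (1 : ℝ) else 0) = 0 :=
        Finset.prod_eq_zero (mem_compl.mpr hiα) (by rw [if_pos hiσ]; ring)
      rw [this]; ring
    · obtain ⟨i, hiα, hiσ⟩ := Finset.not_subset.mp hsub
      have : ∏ j ∈ α, (if j ∈ σ then (1 : ℝ) else 0) = 0 :=
        Finset.prod_eq_zero hiα (if_neg hiσ)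
      rw [this]; ring
  · intro hσ; exact absurd (mem_univ σ) hσ

/-- Lemma 1: `f` is fully `k`-increasing iff its multilinear extension is fully
`k`-increasing on `[0,1]^d`. -/
theorem fully_k_increasing_iff_mle (d k : ℕ) (hk : 1 ≤ k) (hkd : k ≤ d)
    (f : Finset (Fin d) → ℝ) :
    PBFullyInc k f ↔ FullyIncOnR k (fun _ => Set.Icc (0 : ℝ) 1) (mle f) := by
  constructor
  · intro hf s h hh p hp1 hp2 hmem
    rw [diff_mle]
    have hs : ∀ i, s i ∈ Set.Icc (0 : ℝ) 1 := by
      intro i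
      have := hmem ∅ (Finset.empty_mem_powerset p) i
      simpa [shiftR] using this
    refine mul_nonneg (Finset.prod_nonneg fun i _ => hh i) (Finset.sum_nonneg fun γ hγ => ?_)
    rw [mem_powerset] at hγ
    refine mul_nonneg (mul_nonneg (Finset.prod_nonneg fun i _ => (hs i).1)
      (Finset.prod_nonneg fun j _ => by linarith [(hs j).2])) ?_
    exact hf p hp1 hp2 γ (Finset.disjoint_left.mpr fun a ha => mem_compl.mp (hγ ha))
  · intro hF β hb1 hb2 γ hdisj
    set s : Fin d → ℝ := fun i => if i ∈ γ then 1 else 0 with hs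
    set h : Fin d → ℝ := fun i => if i ∈ β then 1 else 0 with hh
    have key : ∀ q ∈ β.powerset, shiftR s h q = fun i => if i ∈ γ ∪ q then (1 : ℝ) else 0 := by
      intro q hq
      rw [mem_powerset] at hq
      funext i
      by_cases hiγ : i ∈ γ
      · have hiq : i ∉ q := fun hiq => (Finset.disjoint_left.mp hdisj hiγ) (hq hiq)
        simp [shiftR, hs, hiγ, hiq, mem_union]
      · by_cases hiq : i ∈ q
        · simp [shiftR, hs, hh, hiγ, hiq, hq hiq, mem_union]
        · simp [shiftR, hs, hh, hiγ, hiq, mem_union]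
    have hmem : ∀ q ∈ β.powerset, ∀ i, shiftR s h q i ∈ Set.Icc (0 : ℝ) 1 := by
      intro q hq i
      rw [key q hq]
      by_cases hi : i ∈ γ ∪ q <;> simp [hi]
    have := hF s h (fun i => by by_cases hi : i ∈ β <;> simp [hh, hi]) β hb1 hb2 hmem
    rw [pbDiff]
    calc (0 : ℝ) ≤ _ := this
    _ = ∑ q ∈ β.powerset, (-1 : ℝ) ^ (β.card - q.card) * f (γ ∪ q) := by
        refine Finset.sum_congr rfl fun q hq => ?_
        rw [key q hq, mle_indicator]
end

section
/- Let k, d ∈ ℕ with 1 ≤ k ≤ d, and let x_1, …, x_d ∈ ℝ^k. For nonempty α, β ⊆ [d] write α ∼ β if max_{i∈α} x_i = max_{i∈β} x_i (componentwise maximum in ℝ^k). Then the family {γ ⊆ [d] : |γ| ≥ k} can be written as a finite disjoint union of set-intervals ⟨σ_j, τ_j⟩ such that for each j: |σ_j| = k, σ_j ⊆ τ_j, and σ_j ∼ τ_j. -/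
open Finset

variable {d k : ℕ}



def smallestK : ℕ → Finset (Fin d) → Finset (Fin d)
  | 0, _ => ∅
  | m+1, s =>
    if h : s.Nonempty then insert (s.min' h) (smallestK m (s.erase (s.min' h))) else ∅

lemma smallestK_subset : ∀ (m : ℕ) (s : Finset (Fin d)), smallestK m s ⊆ s
  | 0, s => by simp [smallestK]
  | m+1, s => by
    by_cases h : s.Nonempty
    · simp only [smallestK, dif_pos h]
      exact insert_subset (s.min'_mem h) ((smallestK_subset m _).trans (erase_subset _ _))
    · simp [smallestK, dif_neg h]

lemma smallestK_card : ∀ (m : ℕ) (s : Finset (Fin d)), m ≤ s.card → (smallestK m s).card = m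
  | 0, s, _ => by simp [smallestK]
  | m+1, s, hm => by
    have h : s.Nonempty := card_pos.mp (lt_of_lt_of_le (Nat.succ_pos m) hm)
    simp only [smallestK, dif_pos h]
    have hmem : s.min' h ∉ smallestK m (s.erase (s.min' h)) := fun hc =>
      (notMem_erase _ _) (smallestK_subset m _ hc)
    have hce : (s.erase (s.min' h)).card = s.card - 1 := card_erase_of_mem (s.min'_mem h)
    rw [card_insert_of_notMem hmem, smallestK_card m _ (by omega)]

lemma smallestK_dom : ∀ (m : ℕ) (s : Finset (Fin d)), ∀ a ∈ s, a ∉ smallestK m s →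
    ∀ b ∈ smallestK m s, b < a
  | 0, s => by simp [smallestK]
  | m+1, s => by
    by_cases h : s.Nonempty
    · simp only [smallestK, dif_pos h]
      intro a ha hna b hb
      have hane : a ≠ s.min' h := fun e => hna (e ▸ mem_insert_self _ _)
      rcases mem_insert.mp hb with rfl | hb'
      · exact lt_of_le_of_ne (s.min'_le a ha) (Ne.symm hane)
      · exact smallestK_dom m _ a (mem_erase.mpr ⟨hane, ha⟩)
          (fun hc => hna (mem_insert_of_mem hc)) b hb'
    · simp [smallestK, dif_neg h]

lemma smallestK_unique {m : ℕ} {s v : Finset (Fin d)} (hm : m ≤ s.card) (hv : v ⊆ s)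
    (hcard : v.card = m) (hdom : ∀ a ∈ s, a ∉ v → ∀ b ∈ v, b < a) :
    smallestK m s = v := by
  have hus : smallestK m s ⊆ s := smallestK_subset m s
  have hucard : (smallestK m s).card = m := smallestK_card m s hm
  have hsub : v ⊆ smallestK m s := by
    intro c hc
    by_contra hcu
    have hne : (smallestK m s \ v).Nonempty := by
      rw [sdiff_nonempty]
      intro hle
      exact hcu ((eq_of_subset_of_card_le hle (by omega)) ▸ hc)
    obtain ⟨c', hc'⟩ := hne
    rw [mem_sdiff] at hc'
    have h1 : c' < c := smallestK_dom m s c (hv hc) hcu c' hc'.1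
    have h2 : c < c' := hdom c' (hus hc'.1) hc'.2 c hc
    exact absurd h1 (not_lt.mpr h2.le)
  exact (eq_of_subset_of_card_le hsub (by omega)).symm

noncomputable def att (x : Fin d → Fin k → ℝ) (γ : Finset (Fin d)) (h : γ.Nonempty)
    (ℓ : Fin k) : Fin d :=
  (γ.filter fun i => γ.sup' h (fun j => x j ℓ) ≤ x i ℓ).min'
    (by
      obtain ⟨b, hb, he⟩ := exists_mem_eq_sup' h (fun j => x j ℓ)
      exact ⟨b, mem_filter.mpr ⟨hb, he.le⟩⟩)

lemma att_mem_filter (x : Fin d → Fin k → ℝ) (γ : Finset (Fin d)) (h : γ.Nonempty) (ℓ : Fin k) :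
    att x γ h ℓ ∈ γ.filter fun i => γ.sup' h (fun j => x j ℓ) ≤ x i ℓ :=
  min'_mem _ _

lemma att_mem (x : Fin d → Fin k → ℝ) (γ : Finset (Fin d)) (h : γ.Nonempty) (ℓ : Fin k) :
    att x γ h ℓ ∈ γ :=
  (mem_filter.mp (att_mem_filter x γ h ℓ)).1

lemma att_spec (x : Fin d → Fin k → ℝ) (γ : Finset (Fin d)) (h : γ.Nonempty) (ℓ : Fin k) :
    γ.sup' h (fun j => x j ℓ) = x (att x γ h ℓ) ℓ :=
  le_antisymm (mem_filter.mp (att_mem_filter x γ h ℓ)).2 (le_sup' (fun j => x j ℓ) (att_mem x γ h ℓ))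

lemma att_min (x : Fin d → Fin k → ℝ) (γ : Finset (Fin d)) (h : γ.Nonempty) (ℓ : Fin k)
    {j : Fin d} (hj : j ∈ γ) (hle : γ.sup' h (fun i => x i ℓ) ≤ x j ℓ) :
    att x γ h ℓ ≤ j :=
  min'_le _ _ (mem_filter.mpr ⟨hj, hle⟩)

noncomputable def Mset (x : Fin d → Fin k → ℝ) (γ : Finset (Fin d)) (h : γ.Nonempty) :
    Finset (Fin d) :=
  univ.image (att x γ h)

lemma Mset_subset (x : Fin d → Fin k → ℝ) (γ : Finset (Fin d)) (h : γ.Nonempty) :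
    Mset x γ h ⊆ γ := by
  intro i hi
  obtain ⟨ℓ, _, rfl⟩ := mem_image.mp hi
  exact att_mem x γ h ℓ

lemma att_mem_Mset (x : Fin d → Fin k → ℝ) (γ : Finset (Fin d)) (h : γ.Nonempty) (ℓ : Fin k) :
    att x γ h ℓ ∈ Mset x γ h :=
  mem_image.mpr ⟨ℓ, mem_univ _, rfl⟩

lemma Mset_card_le (x : Fin d → Fin k → ℝ) (γ : Finset (Fin d)) (h : γ.Nonempty) :
    (Mset x γ h).card ≤ k := by
  simpa [Mset] using card_image_le (s := (univ : Finset (Fin k))) (f := att x γ h)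

lemma sup'_between (x : Fin d → Fin k → ℝ) {γ δ : Finset (Fin d)} (h : γ.Nonempty)
    (h1 : Mset x γ h ⊆ δ) (h2 : δ ⊆ γ) (hδ : δ.Nonempty) (ℓ : Fin k) :
    δ.sup' hδ (fun j => x j ℓ) = γ.sup' h (fun j => x j ℓ) := by
  apply le_antisymm
  · exact sup'_le _ _ fun i hi => le_sup' (fun j => x j ℓ) (h2 hi)
  · rw [att_spec x γ h ℓ]
    exact le_sup' (fun j => x j ℓ) (h1 (att_mem_Mset x γ h ℓ))

lemma att_between (x : Fin d → Fin k → ℝ) {γ δ : Finset (Fin d)} (h : γ.Nonempty)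
    (h1 : Mset x γ h ⊆ δ) (h2 : δ ⊆ γ) (hδ : δ.Nonempty) (ℓ : Fin k) :
    att x δ hδ ℓ = att x γ h ℓ := by
  have hs := sup'_between x h h1 h2 hδ ℓ
  apply le_antisymm
  · exact att_min x δ hδ ℓ (h1 (att_mem_Mset x γ h ℓ)) (by rw [hs, att_spec x γ h ℓ])
  · exact att_min x γ h ℓ (h2 (att_mem x δ hδ ℓ)) (by rw [← hs, att_spec x δ hδ ℓ])

lemma Mset_between (x : Fin d → Fin k → ℝ) {γ δ : Finset (Fin d)} (h : γ.Nonempty)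
    (h1 : Mset x γ h ⊆ δ) (h2 : δ ⊆ γ) (hδ : δ.Nonempty) :
    Mset x δ hδ = Mset x γ h :=
  image_congr fun ℓ _ => att_between x h h1 h2 hδ ℓ

noncomputable def selF (x : Fin d → Fin k → ℝ) (γ : Finset (Fin d)) : Finset (Fin d) :=
  if h : γ.Nonempty then
    Mset x γ h ∪ smallestK (k - (Mset x γ h).card) (γ \ Mset x γ h)
  else ∅

lemma selF_eq (x : Fin d → Fin k → ℝ) {γ : Finset (Fin d)} (h : γ.Nonempty) :
    selF x γ = Mset x γ h ∪ smallestK (k - (Mset x γ h).card) (γ \ Mset x γ h) := by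
  rw [selF, dif_pos h]

lemma selF_subset (x : Fin d → Fin k → ℝ) (γ : Finset (Fin d)) : selF x γ ⊆ γ := by
  by_cases h : γ.Nonempty
  · rw [selF_eq x h]
    exact union_subset (Mset_subset x γ h)
      ((smallestK_subset _ _).trans (sdiff_subset))
  · rw [selF, dif_neg h]
    exact empty_subset _

lemma Mset_subset_selF (x : Fin d → Fin k → ℝ) {γ : Finset (Fin d)} (h : γ.Nonempty) :
    Mset x γ h ⊆ selF x γ := by
  rw [selF_eq x h]; exact subset_union_left

lemma selF_card (x : Fin d → Fin k → ℝ) {γ : Finset (Fin d)} (hγ : k ≤ γ.card) (hk : 1 ≤ k) :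
    (selF x γ).card = k := by
  have h : γ.Nonempty := card_pos.mp (by omega)
  rw [selF_eq x h]
  have hM : (Mset x γ h).card ≤ k := Mset_card_le x γ h
  have hsd : (γ \ Mset x γ h).card = γ.card - (Mset x γ h).card :=
    card_sdiff_of_subset (Mset_subset x γ h)
  have hdisj : Disjoint (Mset x γ h)
      (smallestK (k - (Mset x γ h).card) (γ \ Mset x γ h)) := by
    refine Finset.disjoint_left.mpr fun a ha hb => ?_
    exact (mem_sdiff.mp (smallestK_subset _ _ hb)).2 ha
  rw [card_union_of_disjoint hdisj, smallestK_card _ _ (by omega)]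
  omega

lemma selF_nonempty (x : Fin d → Fin k → ℝ) {γ : Finset (Fin d)} (hγ : k ≤ γ.card)
    (hk : 1 ≤ k) : (selF x γ).Nonempty :=
  card_pos.mp (by rw [selF_card x hγ hk]; omega)

lemma selF_between (x : Fin d → Fin k → ℝ) {γ δ : Finset (Fin d)} (hk : 1 ≤ k)
    (hγ : k ≤ γ.card) (h1 : selF x γ ⊆ δ) (h2 : δ ⊆ γ) :
    selF x δ = selF x γ := by
  have h : γ.Nonempty := card_pos.mp (by omega)
  have hδ : δ.Nonempty := (selF_nonempty x hγ hk).mono h1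
  have hM1 : Mset x γ h ⊆ δ := (Mset_subset_selF x h).trans h1
  have hM : Mset x δ hδ = Mset x γ h := Mset_between x h hM1 h2 hδ
  have hkδ : k ≤ δ.card := by
    calc k = (selF x γ).card := (selF_card x hγ hk).symm
    _ ≤ δ.card := card_le_card h1
  have hFγ : smallestK (k - (Mset x γ h).card) (γ \ Mset x γ h) ⊆ γ \ Mset x γ h :=
    smallestK_subset _ _
  have hFδ : smallestK (k - (Mset x γ h).card) (γ \ Mset x γ h) ⊆ δ \ Mset x γ h := by
    intro a ha
    refine mem_sdiff.mpr ⟨h1 ?_, (mem_sdiff.mp (hFγ ha)).2⟩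
    rw [selF_eq x h]
    exact mem_union_right _ ha
  have hMδcard : (δ \ Mset x γ h).card = δ.card - (Mset x γ h).card := card_sdiff_of_subset hM1
  have hMγcard : (γ \ Mset x γ h).card = γ.card - (Mset x γ h).card :=
    card_sdiff_of_subset (Mset_subset x γ h)
  have hMle : (Mset x γ h).card ≤ k := Mset_card_le x γ h
  rw [selF_eq x hδ, selF_eq x h, hM]
  congr 1
  refine smallestK_unique (by omega) hFδ (smallestK_card _ _ (by omega)) ?_
  intro a ha hna b hb
  exact smallestK_dom _ (γ \ Mset x γ h) a (sdiff_subset_sdiff h2 Subset.rfl ha) hna b hb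

lemma sup'_selF (x : Fin d → Fin k → ℝ) {γ : Finset (Fin d)} (hγ : k ≤ γ.card) (hk : 1 ≤ k)
    (h : γ.Nonempty) (hσ : (selF x γ).Nonempty) (ℓ : Fin k) :
    (selF x γ).sup' hσ (fun j => x j ℓ) = γ.sup' h (fun j => x j ℓ) :=
  sup'_between x h (Mset_subset_selF x h) (selF_subset x γ) hσ ℓ

lemma sdiff_of_union_disjoint {s t : Finset (Fin d)} (h : Disjoint s t) : (s ∪ t) \ s = t := by
  rw [union_sdiff_distrib, sdiff_self, sdiff_eq_self_of_disjoint h.symm]; simp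

lemma selF_union (x : Fin d → Fin k → ℝ) {γ γ' : Finset (Fin d)} (hk : 1 ≤ k)
    (hγ : k ≤ γ.card) (hγ' : k ≤ γ'.card) (he : selF x γ = selF x γ') :
    selF x (γ ∪ γ') = selF x γ := by
  have h : γ.Nonempty := card_pos.mp (by omega)
  have h' : γ'.Nonempty := card_pos.mp (by omega)
  have hu : (γ ∪ γ').Nonempty := h.mono subset_union_left
  have hσne : (selF x γ).Nonempty := selF_nonempty x hγ hk
  have hσγ : selF x γ ⊆ γ := selF_subset x γ
  have hσγ' : selF x γ ⊆ γ' := by rw [he]; exact selF_subset x γ'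
  have hM'σ : Mset x γ' h' ⊆ selF x γ := by rw [he]; exact Mset_subset_selF x h'
  have hsγ : ∀ ℓ, (selF x γ).sup' hσne (fun j => x j ℓ) = γ.sup' h (fun j => x j ℓ) :=
    fun ℓ => sup'_selF x hγ hk h hσne ℓ
  have hsγ' : ∀ ℓ, (selF x γ).sup' hσne (fun j => x j ℓ) = γ'.sup' h' (fun j => x j ℓ) :=
    fun ℓ => sup'_between x h' hM'σ hσγ' hσne ℓ
  have hss : ∀ ℓ, γ.sup' h (fun j => x j ℓ) = γ'.sup' h' (fun j => x j ℓ) :=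
    fun ℓ => (hsγ ℓ).symm.trans (hsγ' ℓ)
  have hsu : ∀ ℓ, (γ ∪ γ').sup' hu (fun j => x j ℓ) = γ.sup' h (fun j => x j ℓ) := by
    intro ℓ
    apply le_antisymm
    · refine sup'_le _ _ fun i hi => ?_
      rcases mem_union.mp hi with hi | hi
      · exact le_sup' (fun j => x j ℓ) hi
      · rw [hss ℓ]; exact le_sup' (fun j => x j ℓ) hi
    · exact sup'_le _ _ fun i hi => le_sup' (fun j => x j ℓ) (subset_union_left hi)
  have hatt : ∀ ℓ, att x γ h ℓ = att x γ' h' ℓ := by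
    intro ℓ
    apply le_antisymm
    · refine att_min x γ h ℓ (hσγ (hM'σ (att_mem_Mset x γ' h' ℓ))) ?_
      rw [hss ℓ, att_spec x γ' h' ℓ]
    · refine att_min x γ' h' ℓ (hσγ' (Mset_subset_selF x h (att_mem_Mset x γ h ℓ))) ?_
      rw [← hss ℓ, att_spec x γ h ℓ]
  have hattu : ∀ ℓ, att x (γ ∪ γ') hu ℓ = att x γ h ℓ := by
    intro ℓ
    apply le_antisymm
    · refine att_min x _ hu ℓ (subset_union_left (att_mem x γ h ℓ)) ?_
      rw [hsu ℓ, att_spec x γ h ℓ]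
    · rcases mem_union.mp (att_mem x _ hu ℓ) with hi | hi
      · refine att_min x γ h ℓ hi ?_
        rw [← hsu ℓ]; exact (att_spec x (γ ∪ γ') hu ℓ).le
      · rw [hatt ℓ]
        refine att_min x γ' h' ℓ hi ?_
        rw [← hss ℓ, ← hsu ℓ]; exact (att_spec x (γ ∪ γ') hu ℓ).le
  have hMu : Mset x (γ ∪ γ') hu = Mset x γ h := image_congr fun ℓ _ => hattu ℓ
  have hM' : Mset x γ' h' = Mset x γ h := image_congr fun ℓ _ => (hatt ℓ).symm
  have hMle : (Mset x γ h).card ≤ k := Mset_card_le x γ h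
  have hMγ : (γ \ Mset x γ h).card = γ.card - (Mset x γ h).card :=
    card_sdiff_of_subset (Mset_subset x γ h)
  -- F = F'
  have hdisjF : Disjoint (Mset x γ h) (smallestK (k - (Mset x γ h).card) (γ \ Mset x γ h)) :=
    Finset.disjoint_left.mpr fun a ha hb => (mem_sdiff.mp (smallestK_subset _ _ hb)).2 ha
  have hdisjF' : Disjoint (Mset x γ h) (smallestK (k - (Mset x γ h).card) (γ' \ Mset x γ h)) :=
    Finset.disjoint_left.mpr fun a ha hb => (mem_sdiff.mp (smallestK_subset _ _ hb)).2 ha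
  have hFF' : smallestK (k - (Mset x γ h).card) (γ \ Mset x γ h)
      = smallestK (k - (Mset x γ h).card) (γ' \ Mset x γ h) := by
    have e1 : selF x γ = Mset x γ h ∪ smallestK (k - (Mset x γ h).card) (γ \ Mset x γ h) :=
      selF_eq x h
    have e2 : selF x γ' = Mset x γ h ∪ smallestK (k - (Mset x γ h).card) (γ' \ Mset x γ h) := by
      rw [selF_eq x h', hM']
    calc smallestK (k - (Mset x γ h).card) (γ \ Mset x γ h)
        = selF x γ \ Mset x γ h := by rw [e1, sdiff_of_union_disjoint hdisjF]
      _ = selF x γ' \ Mset x γ h := by rw [he]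
      _ = smallestK (k - (Mset x γ h).card) (γ' \ Mset x γ h) := by
          rw [e2, sdiff_of_union_disjoint hdisjF']
  rw [selF_eq x hu, selF_eq x h, hMu]
  congr 1
  refine smallestK_unique ?_ ?_ (smallestK_card _ _ (by omega)) ?_
  · calc k - (Mset x γ h).card ≤ (γ \ Mset x γ h).card := by omega
      _ ≤ ((γ ∪ γ') \ Mset x γ h).card :=
        card_le_card (sdiff_subset_sdiff subset_union_left Subset.rfl)
  · exact (smallestK_subset _ _).trans (sdiff_subset_sdiff subset_union_left Subset.rfl)
  · intro a ha hna b hb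
    rw [mem_sdiff, mem_union] at ha
    rcases ha.1 with hag | hag
    · exact smallestK_dom _ (γ \ Mset x γ h) a (mem_sdiff.mpr ⟨hag, ha.2⟩) hna b hb
    · rw [hFF'] at hna hb
      exact smallestK_dom _ (γ' \ Mset x γ h) a (mem_sdiff.mpr ⟨hag, ha.2⟩) hna b hb


/-- Lemma 2: the family `{γ ⊆ [d] : |γ| ≥ k}` is a finite disjoint union of set-intervals
`⟨σ_j, τ_j⟩` with `|σ_j| = k`, `σ_j ⊆ τ_j` and `σ_j ∼ τ_j`, where `α ∼ β` means that the
componentwise maxima `max_{i∈α} x_i` and `max_{i∈β} x_i` agree. -/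
theorem interval_partition (k d : ℕ) (hk : 1 ≤ k) (hkd : k ≤ d) (x : Fin d → Fin k → ℝ) :
    ∃ (n : ℕ) (σ τ : Fin n → Finset (Fin d)),
      (∀ j, (σ j).card = k) ∧
      (∀ j, σ j ⊆ τ j) ∧
      (∀ (j : Fin n) (hσ : (σ j).Nonempty) (hτ : (τ j).Nonempty) (ℓ : Fin k),
        (σ j).sup' hσ (fun i => x i ℓ) = (τ j).sup' hτ (fun i => x i ℓ)) ∧
      (∀ j₁ j₂, j₁ ≠ j₂ →
        Disjoint (Finset.Icc (σ j₁) (τ j₁)) (Finset.Icc (σ j₂) (τ j₂))) ∧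
      Finset.univ.filter (fun γ : Finset (Fin d) => k ≤ γ.card) =
        Finset.univ.biUnion (fun j => Finset.Icc (σ j) (τ j)) := by
  classical
  set P : Finset (Finset (Fin d)) := univ.filter (fun γ : Finset (Fin d) => k ≤ γ.card)
    with hPdef
  have hmemP : ∀ γ : Finset (Fin d), γ ∈ P ↔ k ≤ γ.card := by
    intro γ; simp [hPdef]
  set S : Finset (Finset (Fin d)) := P.image (selF x) with hSdef
  set σ : Fin S.card → Finset (Fin d) :=
    fun j => ((S.equivFin.symm j : {γ // γ ∈ S}) : Finset (Fin d)) with hσdef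
  have hσS : ∀ j, σ j ∈ S := fun j => (S.equivFin.symm j).2
  have hσinj : Function.Injective σ := by
    intro j₁ j₂ he
    exact S.equivFin.symm.injective (Subtype.coe_injective he)
  set Fib : Fin S.card → Finset (Finset (Fin d)) :=
    fun j => P.filter (fun γ => selF x γ = σ j) with hFibdef
  have hFibmem : ∀ j γ, γ ∈ Fib j ↔ (k ≤ γ.card ∧ selF x γ = σ j) := by
    intro j γ
    simp only [hFibdef, mem_filter, hmemP]
  have hFibne : ∀ j, (Fib j).Nonempty := by
    intro j
    obtain ⟨γ, hγP, hγs⟩ := mem_image.mp (hσS j)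
    exact ⟨γ, mem_filter.mpr ⟨hγP, hγs⟩⟩
  have hσcard : ∀ j, (σ j).card = k := by
    intro j
    obtain ⟨γ, hγ⟩ := hFibne j
    rw [hFibmem] at hγ
    rw [← hγ.2, selF_card x hγ.1 hk]
  set τ : Fin S.card → Finset (Fin d) := fun j => (Fib j).sup id with hτdef
  have hτmem : ∀ j, τ j ∈ Fib j := by
    intro j
    have : (Fib j).sup' (hFibne j) id ∈ Fib j := by
      refine Finset.sup'_induction (hFibne j) id ?_ (fun b hb => hb)
      intro a ha b hb
      rw [hFibmem] at ha hb ⊢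
      rw [sup_eq_union]
      refine ⟨le_trans ha.1 (card_le_card subset_union_left), ?_⟩
      rw [selF_union x hk ha.1 hb.1 (ha.2.trans hb.2.symm)]
      exact ha.2
    rwa [Finset.sup'_eq_sup (hFibne j) id] at this
  have hτsel : ∀ j, selF x (τ j) = σ j := fun j => ((hFibmem _ _).mp (hτmem j)).2
  have hτcard : ∀ j, k ≤ (τ j).card := fun j => ((hFibmem _ _).mp (hτmem j)).1
  have hστ : ∀ j, σ j ⊆ τ j := by
    intro j; rw [← hτsel j]; exact selF_subset x (τ j)
  have hIcc : ∀ j, Finset.Icc (σ j) (τ j) = Fib j := by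
    intro j
    ext δ
    rw [Finset.mem_Icc, hFibmem]
    constructor
    · rintro ⟨h1, h2⟩
      have h1' : σ j ⊆ δ := h1
      have h2' : δ ⊆ τ j := h2
      have hcardδ : k ≤ δ.card := by
        calc k = (σ j).card := (hσcard j).symm
        _ ≤ δ.card := card_le_card h1'
      refine ⟨hcardδ, ?_⟩
      rw [selF_between x hk (hτcard j) (by rw [hτsel j]; exact h1') h2']
      exact hτsel j
    · rintro ⟨h1, h2⟩
      constructor
      · rw [← h2]; exact le_iff_subset.mpr (selF_subset x δ)
      · exact Finset.le_sup (f := id) ((hFibmem j δ).mpr ⟨h1, h2⟩)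
  refine ⟨S.card, σ, τ, hσcard, hστ, ?_, ?_, ?_⟩
  · intro j hσne hτne ℓ
    have e : σ j = selF x (τ j) := (hτsel j).symm
    calc (σ j).sup' hσne (fun i => x i ℓ)
        = (selF x (τ j)).sup' (e ▸ hσne) (fun i => x i ℓ) :=
          Finset.sup'_congr hσne e (fun a _ => rfl)
      _ = (τ j).sup' hτne (fun i => x i ℓ) :=
          sup'_selF x (hτcard j) hk hτne (e ▸ hσne) ℓ
  · intro j₁ j₂ hne
    rw [Finset.disjoint_left]
    intro γ hγ1 hγ2
    rw [hIcc, hFibmem] at hγ1 hγ2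
    exact hne (hσinj (hγ1.2.symm.trans hγ2.2))
  · ext γ
    rw [mem_biUnion]
    constructor
    · intro hγ
      refine ⟨S.equivFin ⟨selF x γ, mem_image_of_mem _ hγ⟩, mem_univ _, ?_⟩
      rw [hIcc, hFibmem]
      refine ⟨(hmemP γ).mp hγ, ?_⟩
      simp only [hσdef, Equiv.symm_apply_apply]
    · rintro ⟨j, _, hj⟩
      rw [hIcc, hFibmem] at hj
      exact (hmemP γ).mpr hj.1
end

section
/- Let f : P([d]) → ℝ be a pseudo-Boolean function with multilinear extension f̃, and let β ⊆ [d] be nonempty. Then the iterated partial derivative of f̃ with respect to the variables x_i, i ∈ β, satisfies (∂^β f̃)(x) = Σ_{α ⊆ [d]∖β} (Δ_β f)(α) · Π_{i ∈ α} x_i · Π_{j ∈ [d]∖(α∪β)} (1 − x_j) for all x ∈ ℝ^d. In particular (∂^{[d]} f̃)(x) = (Δ_{[d]} f)(∅) is constant, and (∂^β f̃)(0) = (Δ_β f)(∅). -/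
open Finset

/-- The partial derivative in the `i`-th coordinate direction. -/
noncomputable def pderiv1 {d : ℕ} (i : Fin d) (F : (Fin d → ℝ) → ℝ) : (Fin d → ℝ) → ℝ :=
  fun x => fderiv ℝ F x (Pi.single i 1)

/-- The iterated partial derivative `∂^β`, taken once in each variable `x_i`, `i ∈ β`. -/
noncomputable def pderivs {d : ℕ} (β : Finset (Fin d)) (F : (Fin d → ℝ) → ℝ) :
    (Fin d → ℝ) → ℝ :=
  (β.sort (· ≤ ·)).foldr pderiv1 F

namespace PBaux

variable {d : ℕ}

/-- a single factor of a monomial -/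
def factor (a : Finset (Fin d)) (k : Fin d) (x : Fin d → ℝ) : ℝ :=
  if k ∈ a then x k else 1 - x k

/-- the derivative of a factor -/
noncomputable def factorL (a : Finset (Fin d)) (k : Fin d) : (Fin d → ℝ) →L[ℝ] ℝ :=
  if k ∈ a then ContinuousLinearMap.proj k else -ContinuousLinearMap.proj k

lemma hasFDerivAt_factor (a : Finset (Fin d)) (k : Fin d) (x : Fin d → ℝ) :
    HasFDerivAt (factor a k) (factorL a k) x := by
  by_cases h : k ∈ a
  · have hf : factor a k = fun y : Fin d → ℝ => y k := by funext y; simp [factor, h]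
    rw [hf, factorL, if_pos h]
    exact (ContinuousLinearMap.proj k : (Fin d → ℝ) →L[ℝ] ℝ).hasFDerivAt
  · have hf : factor a k = fun y : Fin d → ℝ => 1 - y k := by funext y; simp [factor, h]
    rw [hf, factorL, if_neg h]
    simpa using (hasFDerivAt_const (1:ℝ) x).fun_sub
      (ContinuousLinearMap.proj k : (Fin d → ℝ) →L[ℝ] ℝ).hasFDerivAt

lemma factorL_single (a : Finset (Fin d)) (k i : Fin d) :
    factorL a k (Pi.single i 1) =
      (if k = i then 1 else 0) * (if k ∈ a then 1 else -1) := by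
  by_cases hk : k = i
  · subst hk
    by_cases h : k ∈ a <;>
      simp [factorL, h, ContinuousLinearMap.proj_apply, ContinuousLinearMap.neg_apply,
        Pi.single_eq_same]
  · by_cases h : k ∈ a <;>
      simp [factorL, h, hk, Pi.single_apply, ContinuousLinearMap.proj_apply,
        ContinuousLinearMap.neg_apply]

lemma prod_factor_eq {α β : Finset (Fin d)} (h : α ⊆ βᶜ) (x : Fin d → ℝ) :
    ∏ k ∈ βᶜ, factor α k x = (∏ i ∈ α, x i) * ∏ j ∈ (α ∪ β)ᶜ, (1 - x j) := by
  have hd : Disjoint α (α ∪ β)ᶜ := Finset.disjoint_left.mpr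
    fun k hk hk' => (Finset.mem_compl.mp hk') (Finset.mem_union_left _ hk)
  have hu : α ∪ (α ∪ β)ᶜ = βᶜ := by
    ext k
    simp only [Finset.mem_union, Finset.compl_union, Finset.mem_inter, Finset.mem_compl]
    by_cases hk : k ∈ α
    · simp [hk, Finset.mem_compl.mp (h hk)]
    · simp [hk]
  rw [← hu, Finset.prod_union hd]
  congr 1
  · exact Finset.prod_congr rfl fun k hk => by simp [factor, hk]
  · refine Finset.prod_congr rfl fun k hk => ?_
    rw [compl_union, Finset.mem_inter] at hk
    simp [factor, Finset.mem_compl.mp hk.1]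

def rhsF (f : Finset (Fin d) → ℝ) (β : Finset (Fin d)) (x : Fin d → ℝ) : ℝ :=
  ∑ α ∈ βᶜ.powerset, pbDiff f β α * (∏ i ∈ α, x i) * ∏ j ∈ (α ∪ β)ᶜ, (1 - x j)

lemma rhsF_eq (f : Finset (Fin d) → ℝ) (β : Finset (Fin d)) (x : Fin d → ℝ) :
    rhsF f β x = ∑ α ∈ βᶜ.powerset, pbDiff f β α * ∏ k ∈ βᶜ, factor α k x := by
  refine Finset.sum_congr rfl fun α hα => ?_
  rw [prod_factor_eq (Finset.mem_powerset.mp hα), mul_assoc]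

lemma hasFDerivAt_rhsF (f : Finset (Fin d) → ℝ) (β : Finset (Fin d)) (x : Fin d → ℝ) :
    HasFDerivAt (rhsF f β)
      (∑ α ∈ βᶜ.powerset, pbDiff f β α •
        ∑ k ∈ βᶜ, (∏ j ∈ βᶜ.erase k, factor α j x) • factorL α k) x := by
  have : HasFDerivAt (fun y => ∑ α ∈ βᶜ.powerset, pbDiff f β α * ∏ k ∈ βᶜ, factor α k y)
      (∑ α ∈ βᶜ.powerset, pbDiff f β α •
        ∑ k ∈ βᶜ, (∏ j ∈ βᶜ.erase k, factor α j x) • factorL α k) x := by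
    refine HasFDerivAt.fun_sum fun α _ => ?_
    exact (HasFDerivAt.finset_prod fun k _ => hasFDerivAt_factor α k x).const_mul _
  exact this.congr_of_eventuallyEq (Filter.Eventually.of_forall fun y => rhsF_eq f β y)

lemma pbDiff_insert (f : Finset (Fin d) → ℝ) {β α : Finset (Fin d)} {i : Fin d}
    (hi : i ∉ β) (hα : i ∉ α) :
    pbDiff f (insert i β) α = pbDiff f β (insert i α) - pbDiff f β α := by
  unfold pbDiff
  rw [Finset.sum_powerset_insert hi, Finset.card_insert_of_notMem hi]
  have e1 : ∀ γ ∈ β.powerset, (-1:ℝ) ^ (β.card + 1 - γ.card) * f (α ∪ γ)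
      = -((-1:ℝ) ^ (β.card - γ.card) * f (α ∪ γ)) := by
    intro γ hγ
    rw [Finset.mem_powerset] at hγ
    have hle : γ.card ≤ β.card := Finset.card_le_card hγ
    rw [Nat.succ_sub hle, pow_succ]
    ring
  have e2 : ∀ γ ∈ β.powerset, (-1:ℝ) ^ (β.card + 1 - (insert i γ).card) * f (α ∪ insert i γ)
      = (-1:ℝ) ^ (β.card - γ.card) * f (insert i α ∪ γ) := by
    intro γ hγ
    rw [Finset.mem_powerset] at hγ
    have hiγ : i ∉ γ := fun h => hi (hγ h)
    rw [Finset.card_insert_of_notMem hiγ, Nat.succ_sub_succ, Finset.union_insert,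
      Finset.insert_union]
  rw [Finset.sum_congr rfl e1, Finset.sum_congr rfl e2, Finset.sum_neg_distrib]
  ring

lemma step (f : Finset (Fin d) → ℝ) {β : Finset (Fin d)} {i : Fin d} (hi : i ∉ β)
    (x : Fin d → ℝ) : pderiv1 i (rhsF f β) x = rhsF f (insert i β) x := by
  have hic : i ∈ βᶜ := Finset.mem_compl.mpr hi
  rw [pderiv1, (hasFDerivAt_rhsF f β x).fderiv]
  have hins : (insert i β)ᶜ = βᶜ.erase i := by
    ext k; simp [Finset.mem_erase, and_comm, eq_comm]
  -- evaluate the derivative at Pi.single i 1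
  rw [ContinuousLinearMap.sum_apply]
  have heval : ∀ α : Finset (Fin d),
      (pbDiff f β α • ∑ k ∈ βᶜ, (∏ j ∈ βᶜ.erase k, factor α j x) • factorL α k)
        (Pi.single i 1) =
      pbDiff f β α * ((∏ j ∈ βᶜ.erase i, factor α j x) * (if i ∈ α then 1 else -1)) := by
    intro α
    rw [ContinuousLinearMap.smul_apply, ContinuousLinearMap.sum_apply]
    congr 1
    rw [Finset.sum_eq_single i]
    · simp [ContinuousLinearMap.smul_apply, factorL_single, smul_eq_mul]
    · intro k _ hk
      simp [ContinuousLinearMap.smul_apply, factorL_single, hk]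
    · intro h; exact absurd hic h
  simp only [heval]
  -- split the sum over subsets of βᶜ = insert i (βᶜ.erase i)
  have hps : βᶜ.powerset = (insert i (βᶜ.erase i)).powerset := by
    rw [Finset.insert_erase hic]
  rw [hps, Finset.sum_powerset_insert (Finset.notMem_erase i βᶜ)]
  have hfac : ∀ α : Finset (Fin d), i ∉ α →
      ∏ j ∈ βᶜ.erase i, factor (insert i α) j x = ∏ j ∈ βᶜ.erase i, factor α j x := by
    intro α hiα
    refine Finset.prod_congr rfl fun j hj => ?_
    have hji : j ≠ i := (Finset.mem_erase.mp hj).1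
    simp [factor, Finset.mem_insert, hji]
  rw [rhsF_eq, hins]
  rw [← Finset.sum_add_distrib]
  refine Finset.sum_congr rfl fun α hα => ?_
  rw [Finset.mem_powerset] at hα
  have hiα : i ∉ α := fun h => Finset.notMem_erase i βᶜ (hα h)
  rw [pbDiff_insert f hi hiα, hfac α hiα]
  simp [hiα, Finset.mem_insert]
  ring

lemma rhsF_empty (f : Finset (Fin d) → ℝ) : rhsF f ∅ = mle f := by
  funext x
  unfold rhsF mle
  rw [Finset.compl_empty, Finset.powerset_univ]
  refine Finset.sum_congr rfl fun α _ => ?_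
  simp [pbDiff]

lemma foldr_eq (f : Finset (Fin d) → ℝ) :
    ∀ l : List (Fin d), l.Nodup → l.foldr pderiv1 (mle f) = rhsF f l.toFinset := by
  intro l
  induction l with
  | nil => intro _; simp [rhsF_empty]
  | cons a l ih =>
    intro hnd
    rw [List.nodup_cons] at hnd
    rw [List.foldr_cons, ih hnd.2, List.toFinset_cons]
    funext x
    exact step f (by simpa using hnd.1) x

lemma pderivs_eq_rhsF (f : Finset (Fin d) → ℝ) (β : Finset (Fin d)) :
    pderivs β (mle f) = rhsF f β := by
  rw [pderivs, foldr_eq f _ (Finset.sort_nodup β _), Finset.sort_toFinset]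

end PBaux

/-- Identity (5) for iterated partial derivatives of the multilinear extension, together
with the particular cases `∂^{[d]} f̃ ≡ (Δ_{[d]} f)(∅)` and `(∂^β f̃)(0) = (Δ_β f)(∅)`. -/
theorem pderivs_mle (d : ℕ) (f : Finset (Fin d) → ℝ) (β : Finset (Fin d))
    (hβ : β.Nonempty) :
    (∀ x : Fin d → ℝ, pderivs β (mle f) x =
      ∑ α ∈ βᶜ.powerset,
        pbDiff f β α * (∏ i ∈ α, x i) * ∏ j ∈ (α ∪ β)ᶜ, (1 - x j)) ∧
    (∀ x : Fin d → ℝ, pderivs Finset.univ (mle f) x = pbDiff f Finset.univ ∅) ∧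
    pderivs β (mle f) 0 = pbDiff f β ∅ := by
  refine ⟨fun x => by rw [PBaux.pderivs_eq_rhsF]; rfl, fun x => ?_, ?_⟩
  · rw [PBaux.pderivs_eq_rhsF]
    unfold PBaux.rhsF
    simp
  · rw [PBaux.pderivs_eq_rhsF]
    unfold PBaux.rhsF
    rw [Finset.sum_eq_single ∅]
    · simp
    · intro α _ hne
      have : (∏ i ∈ α, (0:ℝ)) = 0 := by
        rw [Finset.prod_const]
        exact zero_pow (by simpa [Finset.card_eq_zero] using hne)
      simp only [Pi.zero_apply]
      rw [this]; ring
    · simp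
end

section
/- Let f : P([d]) → ℝ be a pseudo-Boolean function, let A = A_1 × … × A_k with each A_j ⊆ ℝ̄ nonempty, and let a_1, …, a_d ∈ A. For i ∈ [d] define g_i : A → {0,1} by g_i(x) := 1 if x ≥ a_i (componentwise) and 0 otherwise. Then for all x ∈ A: f̃(g_1(x), …, g_d(x)) = Σ_{α ⊆ [d]} (Δ_α f)(∅) · 1[x ≥ max_{i∈α} a_i], where max_{i∈α} a_i is the componentwise maximum (for α = ∅ the condition is vacuous, so the term equals (Δ_∅ f)(∅) = f(∅)). -/
open Finset

lemma pbDiff_insert {d : ℕ} (f : Finset (Fin d) → ℝ) (α : Finset (Fin d))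
    (i : Fin d) (hi : i ∉ α) :
    pbDiff f (insert i α) ∅ = pbDiff (fun β => f (insert i β)) α ∅ - pbDiff f α ∅ := by
  unfold pbDiff
  rw [Finset.sum_powerset_insert hi]
  have h1 : ∑ β ∈ α.powerset, (-1 : ℝ) ^ ((insert i α).card - β.card) * f (∅ ∪ β)
      = -∑ β ∈ α.powerset, (-1 : ℝ) ^ (α.card - β.card) * f (∅ ∪ β) := by
    rw [← Finset.sum_neg_distrib]
    refine Finset.sum_congr rfl fun β hβ => ?_
    rw [Finset.mem_powerset] at hβ
    have hc : β.card ≤ α.card := Finset.card_le_card hβ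
    rw [Finset.card_insert_of_notMem hi, Nat.succ_sub hc, pow_succ]
    ring
  have h2 : ∑ β ∈ α.powerset,
        (-1 : ℝ) ^ ((insert i α).card - (insert i β).card) * f (∅ ∪ insert i β)
      = ∑ β ∈ α.powerset, (-1 : ℝ) ^ (α.card - β.card) * f (insert i (∅ ∪ β)) := by
    refine Finset.sum_congr rfl fun β hβ => ?_
    rw [Finset.mem_powerset] at hβ
    have hiβ : i ∉ β := fun h => hi (hβ h)
    rw [Finset.card_insert_of_notMem hi, Finset.card_insert_of_notMem hiβ,
      Nat.succ_sub_succ, Finset.empty_union, Finset.empty_union]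
  rw [h1, h2]
  ring

lemma mobius {d : ℕ} (S : Finset (Fin d)) (f : Finset (Fin d) → ℝ) :
    ∑ α ∈ S.powerset, pbDiff f α ∅ = f S := by
  induction S using Finset.induction_on generalizing f with
  | empty => simp [pbDiff]
  | @insert i S hi ih =>
      rw [Finset.sum_powerset_insert hi]
      have h : ∑ α ∈ S.powerset, pbDiff f (insert i α) ∅
          = ∑ α ∈ S.powerset, (pbDiff (fun β => f (insert i β)) α ∅ - pbDiff f α ∅) := by
        refine Finset.sum_congr rfl fun α hα => ?_
        rw [Finset.mem_powerset] at hα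
        exact pbDiff_insert f α i (fun h => hi (hα h))
      rw [h, Finset.sum_sub_distrib, ih f, ih (fun β => f (insert i β))]
      ring

/-- If each `g_i` is the indicator (distribution function of `ε_{a_i}`) of
`{x : x ≥ a_i}`, then `f̃ ∘ (g_1,…,g_d) = Σ_α (Δ_α f)(∅) · 1[x ≥ max_{i∈α} a_i]`.
The condition `x ≥ max_{i∈α} a_i` is expressed as `∀ i ∈ α, a i ≤ x`
(componentwise order on `Fin k → EReal`), which is vacuous for `α = ∅`. -/
theorem mle_comp_onePoint_df (d k : ℕ) (f : Finset (Fin d) → ℝ)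
    (A : Fin k → Set EReal) (hA : ∀ j, (A j).Nonempty)
    (a : Fin d → (Fin k → EReal)) (ha : ∀ i j, a i j ∈ A j)
    (x : Fin k → EReal) (hx : ∀ j, x j ∈ A j) :
    mle f (fun i => Set.indicator {y : Fin k → EReal | a i ≤ y} 1 x) =
      ∑ α : Finset (Fin d),
        pbDiff f α ∅ * Set.indicator {y : Fin k → EReal | ∀ i ∈ α, a i ≤ y} 1 x := by
  classical
  set S : Finset (Fin d) := Finset.univ.filter (fun i => a i ≤ x) with hS
  have hmemS : ∀ i : Fin d, i ∈ S ↔ a i ≤ x := by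
    intro i; simp [hS]
  have hb : ∀ i : Fin d,
      Set.indicator {y : Fin k → EReal | a i ≤ y} (1 : (Fin k → EReal) → ℝ) x
        = if i ∈ S then 1 else 0 := by
    intro i
    by_cases h : a i ≤ x <;> simp [Set.indicator_apply, hmemS, h]
  -- LHS = f S
  have hLHS : mle f (fun i => Set.indicator {y : Fin k → EReal | a i ≤ y} 1 x) = f S := by
    unfold mle
    rw [Finset.sum_eq_single S]
    · simp only [hb]
      rw [Finset.prod_eq_one (fun i hi => by simp [if_pos hi]),
        Finset.prod_eq_one (fun j hj => by simp [if_neg (Finset.mem_compl.mp hj)])]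
      ring
    · intro α _ hne
      simp only [hb]
      by_cases hsub : α ⊆ S
      · obtain ⟨i, hiS, hiα⟩ := Finset.exists_of_ssubset (hsub.ssubset_of_ne hne)
        have h0 : ∏ j ∈ αᶜ, (1 - (if j ∈ S then (1 : ℝ) else 0)) = 0 :=
          Finset.prod_eq_zero (Finset.mem_compl.mpr hiα) (by simp [hiS])
        rw [h0]; ring
      · obtain ⟨i, hiα, hiS⟩ := Finset.not_subset.mp hsub
        have h0 : ∏ j ∈ α, (if j ∈ S then (1 : ℝ) else 0) = 0 :=
          Finset.prod_eq_zero hiα (by simp [hiS])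
        rw [h0]; ring
    · simp
  -- RHS indicator
  have hind : ∀ α : Finset (Fin d),
      Set.indicator {y : Fin k → EReal | ∀ i ∈ α, a i ≤ y} (1 : (Fin k → EReal) → ℝ) x
        = if α ⊆ S then 1 else 0 := by
    intro α
    have : (∀ i ∈ α, a i ≤ x) ↔ α ⊆ S := by
      constructor
      · intro h i hi; exact (hmemS i).mpr (h i hi)
      · intro h i hi; exact (hmemS i).mp (h hi)
    by_cases h : α ⊆ S <;> simp [Set.indicator_apply, this, h]
  have hRHS : ∑ α : Finset (Fin d),
      pbDiff f α ∅ * Set.indicator {y : Fin k → EReal | ∀ i ∈ α, a i ≤ y} 1 x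
        = ∑ α ∈ S.powerset, pbDiff f α ∅ := by
    simp only [hind, mul_ite, mul_one, mul_zero]
    rw [← Finset.sum_filter]
    congr 1
    ext α
    simp [Finset.mem_powerset]
  rw [hLHS, hRHS, mobius]
end
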